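/- arXiv:2504.14083 — 8 statements merged into one kernel-verified Lean document; each statement's English description precedes it below -/
import Mathlib

section
/- With values taken in the extended reals, sup_{x ∈ F_κ} inf_{φ ∈ Ψ} L(φ, x) = inf_{φ ∈ Ψ} sup_{x ∈ F_κ} L(φ, x); that is, the value of the Sion program sup_{x ∈ F_κ} S(x) equals the value of the dual program inf_{φ ∈ Ψ} D(φ). Moreover the supremum on the left-hand side is attained at some x ∈ F_κ. -/
/-! For `φ ∈ Ψ` the Lagrangian `L φ` is a quadratic function of `x` whose matrix `Ao + A_φ` is
positive semidefinite, hence it is continuous and concave in `x`; it is affine in `φ`, and `Ψ` is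
convex. The set `Fκ` is a compact superlevel set of the quadratic `f_κ`. If `Re⟨v, A_κ v⟩ < 0` for
some `v`, then `f_κ` tends to `+∞` along every ray in direction `v`, so `Fκ` would be unbounded;
hence `f_κ` is concave and `Fκ` is convex. Sion's minimax theorem then applies with `Fκ` as the
compact side. The supremum is attained because `x ↦ inf_φ L(φ, x)` is upper semicontinuous. -/

open Matrix ComplexOrder

section QuadraticFunction

variable {ι : Type*} [Fintype ι]

def quadFun (M : Matrix ι ι ℂ) (t : ι → ℂ) (c : ℝ) (x : ι → ℂ) : ℝ :=
  2 * (star t ⬝ᵥ x).re - (star x ⬝ᵥ M *ᵥ x).re + c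

theorem continuous_quadFun (M : Matrix ι ι ℂ) (t : ι → ℂ) (c : ℝ) :
    Continuous (quadFun M t c) := by
  unfold quadFun
  fun_prop

theorem quadFun_add (M M' : Matrix ι ι ℂ) (t t' : ι → ℂ) (c c' : ℝ) (x : ι → ℂ) :
    quadFun M t c x + quadFun M' t' c' x = quadFun (M + M') (t + t') (c + c') x := by
  simp only [quadFun, star_add, add_mulVec, add_dotProduct, dotProduct_add, Complex.add_re]
  ring

theorem sum_mul_quadFun {J : Type*} [Fintype J] (M : J → Matrix ι ι ℂ) (t : J → ι → ℂ)
    (c : J → ℝ) (r : J → ℝ) (x : ι → ℂ) :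
    ∑ j, r j * quadFun (M j) (t j) (c j) x
      = quadFun (∑ j, r j • M j) (∑ j, r j • t j) (∑ j, r j * c j) x := by
  simp only [quadFun, star_sum, star_smul, star_trivial, sum_mulVec, smul_mulVec, sum_dotProduct,
    dotProduct_sum, smul_dotProduct, dotProduct_smul, Complex.re_sum, Complex.smul_re, smul_eq_mul,
    mul_add, mul_sub, Finset.sum_add_distrib, Finset.sum_sub_distrib, Finset.mul_sum]
  ring_nf

theorem quadFun_add_smul (M : Matrix ι ι ℂ) (t : ι → ℂ) (c : ℝ) (x v : ι → ℂ) (τ : ℝ) :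
    quadFun M t c (x + τ • v) = quadFun M t c x
      + τ * (2 * (star t ⬝ᵥ v).re - (star x ⬝ᵥ M *ᵥ v).re - (star v ⬝ᵥ M *ᵥ x).re)
      - τ ^ 2 * (star v ⬝ᵥ M *ᵥ v).re := by
  simp only [quadFun, star_add, star_smul, star_trivial, mulVec_add, mulVec_smul, dotProduct_add,
    add_dotProduct, dotProduct_smul, smul_dotProduct, Complex.add_re, Complex.smul_re, smul_eq_mul]
  ring

theorem concaveOn_quadFun {M : Matrix ι ι ℂ} (hM : ∀ v, 0 ≤ (star v ⬝ᵥ M *ᵥ v).re)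
    (t : ι → ℂ) (c : ℝ) : ConcaveOn ℝ Set.univ (quadFun M t c) := by
  refine ⟨convex_univ, fun x _ y _ a b ha hb hab => ?_⟩
  obtain rfl : b = 1 - a := by linarith
  have hx : quadFun M t c x = quadFun M t c (y + (1 : ℝ) • (x - y)) := by simp
  rw [show a • x + (1 - a) • y = y + a • (x - y) by module, hx, quadFun_add_smul,
    quadFun_add_smul]
  simp only [smul_eq_mul]
  nlinarith [mul_nonneg (mul_nonneg ha hb) (hM (x - y))]

open Filter in
theorem re_dotProduct_mulVec_nonneg_of_isCompact {M : Matrix ι ι ℂ} {t : ι → ℂ} {c : ℝ}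
    (hK : IsCompact {x | 0 ≤ quadFun M t c x}) (hne : {x | 0 ≤ quadFun M t c x}.Nonempty)
    (v : ι → ℂ) : 0 ≤ (star v ⬝ᵥ M *ᵥ v).re := by
  by_contra! hv
  obtain ⟨x, -⟩ := hne
  have hv0 : v ≠ 0 := by rintro rfl; simp at hv
  set D := 2 * (star t ⬝ᵥ v).re - (star x ⬝ᵥ M *ᵥ v).re - (star v ⬝ᵥ M *ᵥ x).re
  have hline : Tendsto (fun τ : ℝ => quadFun M t c (x + τ • v)) atTop atTop := by
    have h := tendsto_id.atTop_mul_atTop₀ <| tendsto_atTop_add_const_left _ D <|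
      tendsto_id.atTop_mul_const (neg_pos.mpr hv)
    refine (tendsto_atTop_add_const_left _ (quadFun M t c x) h).congr fun τ => ?_
    rw [quadFun_add_smul]
    simp only [id]
    ring
  have hfar : Tendsto (fun τ : ℝ => ‖x + τ • v‖) atTop atTop := by
    refine tendsto_atTop_mono' _ ?_ <| tendsto_atTop_add_const_right _ (-‖x‖) <|
      tendsto_id.atTop_mul_const (norm_pos_iff.mpr hv0)
    filter_upwards [eventually_ge_atTop 0] with τ hτ
    have h := norm_sub_le (x + τ • v) x
    rw [add_sub_cancel_left, norm_smul, Real.norm_of_nonneg hτ] at h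
    simp only [id]
    linarith
  obtain ⟨R, hR⟩ := hK.isBounded.exists_norm_le
  obtain ⟨τ, hτK, hτR⟩ := ((hline.eventually_ge_atTop 0).and (hfar.eventually_gt_atTop R)).exists
  exact (hR _ hτK).not_gt hτR

theorem Matrix.PosSemidef.re_dotProduct_mulVec_nonneg {M : Matrix ι ι ℂ} (hM : M.PosSemidef)
    (v : ι → ℂ) : 0 ≤ (star v ⬝ᵥ M *ᵥ v).re :=
  (Complex.nonneg_iff.mp (hM.dotProduct_mulVec_nonneg v)).1

end QuadraticFunction

theorem convex_setOf_posSemidef_add_sum_smul {ι J : Type*} [Fintype J] (A₀ : Matrix ι ι ℂ)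
    (A : J → Matrix ι ι ℂ) : Convex ℝ {φ : J → ℝ | (A₀ + ∑ j, φ j • A j).PosSemidef} := by
  intro φ hφ ψ hψ a b ha hb hab
  have hsplit : A₀ + ∑ j, (a • φ + b • ψ) j • A j
      = a • (A₀ + ∑ j, φ j • A j) + b • (A₀ + ∑ j, ψ j • A j) := by
    simp only [Pi.add_apply, Pi.smul_apply, smul_eq_mul, add_smul, mul_smul, Finset.sum_add_distrib,
      smul_add, Finset.smul_sum]
    conv_lhs => rw [← one_smul ℝ A₀, ← hab, add_smul]
    abel
  rw [Set.mem_ofPred_eq, hsplit]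
  exact (hφ.smul ha).add (hψ.smul hb)

theorem convexOn_const_add_sum_mul {J : Type*} [Fintype J] (a : ℝ) (b : J → ℝ) :
    ConvexOn ℝ Set.univ fun φ : J → ℝ => a + ∑ j, φ j * b j := by
  refine ⟨convex_univ, fun φ _ ψ _ p q _ _ hpq => le_of_eq ?_⟩
  simp only [Pi.add_apply, Pi.smul_apply, smul_eq_mul, add_mul, Finset.sum_add_distrib, mul_assoc,
    ← Finset.mul_sum]
  linear_combination (-a) * hpq

namespace Sion

variable {E F β : Type*} [CompleteLinearOrder β] [DenselyOrdered β]
  [TopologicalSpace E] [AddCommGroup E] [Module ℝ E] [IsTopologicalAddGroup E] [ContinuousSMul ℝ E]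
  [TopologicalSpace F] [AddCommGroup F] [Module ℝ F] [IsTopologicalAddGroup F] [ContinuousSMul ℝ F]
  {X : Set E} {Y : Set F} {f : E → F → β}

theorem iSup₂_iInf₂_eq_iInf₂_iSup₂_and_exists (ne_X : X.Nonempty) (cX : Convex ℝ X)
    (kX : IsCompact X) (hfy : ∀ y ∈ Y, UpperSemicontinuousOn (fun x => f x y) X)
    (hfy' : ∀ y ∈ Y, QuasiconcaveOn ℝ X fun x => f x y) (cY : Convex ℝ Y)
    (hfx : ∀ x ∈ X, LowerSemicontinuousOn (f x) Y) (hfx' : ∀ x ∈ X, QuasiconvexOn ℝ Y (f x)) :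
    (⨆ x ∈ X, ⨅ y ∈ Y, f x y) = (⨅ y ∈ Y, ⨆ x ∈ X, f x y) ∧
      ∃ x ∈ X, (⨅ y ∈ Y, f x y) = ⨆ x' ∈ X, ⨅ y ∈ Y, f x' y := by
  -- `Sion.minimax'` has its compact set on the inf side, so apply it in the order dual.
  refine ⟨minimax' (β := βᵒᵈ) ne_X cX kX hfy (fun y hy => (hfy' y hy).dual) cY hfx
    (fun x hx => (hfx' x hx).dual), ?_⟩
  obtain ⟨a, ha, hmax⟩ :=
    (upperSemicontinuousOn_biInf (f := fun y _ x => f x y) hfy).exists_isMaxOn ne_X kX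
  exact ⟨a, ha, le_antisymm (le_iSup₂ (f := fun x _ => ⨅ y ∈ Y, f x y) a ha) (iSup₂_le hmax)⟩

theorem iSup₂_iInf₂_coe_eq_iInf₂_iSup₂_coe_and_exists {g : E → F → ℝ} (ne_X : X.Nonempty)
    (cX : Convex ℝ X) (kX : IsCompact X) (hgy : ∀ y ∈ Y, ContinuousOn (fun x => g x y) X)
    (hgy' : ∀ y ∈ Y, ConcaveOn ℝ X fun x => g x y) (cY : Convex ℝ Y)
    (hgx : ∀ x ∈ X, ContinuousOn (g x) Y) (hgx' : ∀ x ∈ X, ConvexOn ℝ Y (g x)) :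
    (⨆ x ∈ X, ⨅ y ∈ Y, (g x y : EReal)) = (⨅ y ∈ Y, ⨆ x ∈ X, (g x y : EReal)) ∧
      ∃ x ∈ X, (⨅ y ∈ Y, (g x y : EReal)) = ⨆ x' ∈ X, ⨅ y ∈ Y, (g x' y : EReal) :=
  iSup₂_iInf₂_eq_iInf₂_iSup₂_and_exists ne_X cX kX
    (fun y hy => (continuous_coe_real_ereal.comp_continuousOn (hgy y hy)).upperSemicontinuousOn)
    (fun y hy => QuasiconcaveOn.monotone_comp (g := Real.toEReal) EReal.coe_strictMono.monotone
      (hgy' y hy).quasiconcaveOn) cY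
    (fun x hx => (continuous_coe_real_ereal.comp_continuousOn (hgx x hx)).lowerSemicontinuousOn)
    (fun x hx => QuasiconvexOn.monotone_comp (g := Real.toEReal) EReal.coe_strictMono.monotone
      (hgx' x hx).quasiconvexOn)

end Sion

theorem sion_duality_for_SCQP_general
    (n : ℕ) (J : Type) [Fintype J]
    (Ao : Matrix (Fin n) (Fin n) ℂ) (A : J → Matrix (Fin n) (Fin n) ℂ)
    (so : Fin n → ℂ) (s : J → Fin n → ℂ) (co : ℝ) (c : J → ℝ)
    (fo : (Fin n → ℂ) → ℝ)
    (hfo : ∀ x, fo x = 2 * (star so ⬝ᵥ x).re - (star x ⬝ᵥ Ao.mulVec x).re + co)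
    (f : J → (Fin n → ℂ) → ℝ)
    (hf : ∀ j x, f j x = 2 * (star (s j) ⬝ᵥ x).re - (star x ⬝ᵥ (A j).mulVec x).re + c j)
    (L : (J → ℝ) → (Fin n → ℂ) → ℝ)
    (hL : ∀ φ x, L φ x = fo x + ∑ j, φ j * f j x)
    (Ψ : Set (J → ℝ))
    (hΨ : Ψ = {φ | (∀ j, 0 ≤ φ j) ∧ (Ao + ∑ j, φ j • A j).PosSemidef})
    (κ : J → ℝ)
    (Fκ : Set (Fin n → ℂ))
    (hFκ : Fκ = {x | 0 ≤ ∑ j, κ j * f j x})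
    (hFκne : Fκ.Nonempty) (hFκcpt : IsCompact Fκ) :
    (⨆ x ∈ Fκ, ⨅ φ ∈ Ψ, (L φ x : EReal)) = (⨅ φ ∈ Ψ, ⨆ x ∈ Fκ, (L φ x : EReal)) ∧
    ∃ x ∈ Fκ, (⨅ φ ∈ Ψ, (L φ x : EReal)) = ⨆ y ∈ Fκ, ⨅ φ ∈ Ψ, (L φ y : EReal) := by
  obtain rfl : fo = quadFun Ao so co := funext hfo
  obtain rfl : f = fun j => quadFun (A j) (s j) (c j) := funext fun j => funext (hf j)
  have hLq (φ : J → ℝ) :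
      L φ = quadFun (Ao + ∑ j, φ j • A j) (so + ∑ j, φ j • s j) (co + ∑ j, φ j * c j) := by
    funext x
    rw [hL, sum_mul_quadFun, quadFun_add]
  have hFκq : Fκ = {x | 0 ≤ quadFun (∑ j, κ j • A j) (∑ j, κ j • s j) (∑ j, κ j * c j) x} := by
    simp only [hFκ, sum_mul_quadFun]
  have hFκconvex : Convex ℝ Fκ := by
    have hAκ := re_dotProduct_mulVec_nonneg_of_isCompact (hFκq ▸ hFκcpt) (hFκq ▸ hFκne)
    simpa [hFκq] using (concaveOn_quadFun hAκ _ _).convex_ge 0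
  have hΨconvex : Convex ℝ Ψ :=
    hΨ ▸ (convex_Ici (0 : J → ℝ)).inter (convex_setOf_posSemidef_add_sum_smul Ao A)
  refine Sion.iSup₂_iInf₂_coe_eq_iInf₂_iSup₂_coe_and_exists (g := fun x φ => L φ x) hFκne
    hFκconvex hFκcpt (fun φ _ => ?_) (fun φ hφ => ?_) hΨconvex (fun x _ => ?_) (fun x _ => ?_)
  · exact (hLq φ ▸ continuous_quadFun _ _ _).continuousOn
  · rw [hΨ] at hφ
    exact hLq φ ▸ (concaveOn_quadFun hφ.2.re_dotProduct_mulVec_nonneg _ _).subset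
      (Set.subset_univ _) hFκconvex
  · simp only [hL]
    fun_prop
  · simp only [hL]
    exact (convexOn_const_add_sum_mul _ _).subset (Set.subset_univ _) hΨconvex

/-- Lemma 0, Sion minimax for SCQPs.
With values in the extended reals,
`sup_{x ∈ Fκ} inf_{φ ∈ Ψ} L(φ,x) = inf_{φ ∈ Ψ} sup_{x ∈ Fκ} L(φ,x)`,
and the supremum on the left is attained at some `x ∈ Fκ`. -/
theorem sion_duality_for_SCQP
    (n : ℕ) (hn : 1 ≤ n) (J : Type) [Fintype J]
    (Ao : Matrix (Fin n) (Fin n) ℂ) (A : J → Matrix (Fin n) (Fin n) ℂ)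
    (so : Fin n → ℂ) (s : J → Fin n → ℂ) (co : ℝ) (c : J → ℝ)
    (hAo : Ao.IsHermitian) (hA : ∀ j, (A j).IsHermitian)
    (fo : (Fin n → ℂ) → ℝ)
    (hfo : ∀ x, fo x = 2 * (star so ⬝ᵥ x).re - (star x ⬝ᵥ Ao.mulVec x).re + co)
    (f : J → (Fin n → ℂ) → ℝ)
    (hf : ∀ j x, f j x = 2 * (star (s j) ⬝ᵥ x).re - (star x ⬝ᵥ (A j).mulVec x).re + c j)
    (L : (J → ℝ) → (Fin n → ℂ) → ℝ)
    (hL : ∀ φ x, L φ x = fo x + ∑ j, φ j * f j x)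
    (Ψ : Set (J → ℝ))
    (hΨ : Ψ = {φ | (∀ j, 0 ≤ φ j) ∧ (Ao + ∑ j, φ j • A j).PosSemidef})
    (hΨne : Ψ.Nonempty)
    (κ : J → ℝ) (hκ : ∀ j, 0 ≤ κ j)
    (Fκ : Set (Fin n → ℂ))
    (hFκ : Fκ = {x | 0 ≤ ∑ j, κ j * f j x})
    (hFκne : Fκ.Nonempty) (hFκcpt : IsCompact Fκ) :
    (⨆ x ∈ Fκ, ⨅ φ ∈ Ψ, (L φ x : EReal)) = (⨅ φ ∈ Ψ, ⨆ x ∈ Fκ, (L φ x : EReal)) ∧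
    ∃ x ∈ Fκ, (⨅ φ ∈ Ψ, (L φ x : EReal)) = ⨆ y ∈ Fκ, ⨅ φ ∈ Ψ, (L φ y : EReal) :=
  sion_duality_for_SCQP_general n J Ao A so s co c fo hfo f hf L hL Ψ hΨ κ Fκ hFκ hFκne hFκcpt
end

section
/- Assume A_o = 0, so that the objective f_o(x) = 2·Re⟨s_o, x⟩ + c_o is affine. Then for every y in the convex hull (over ℝ) of the feasible set F_P, S(y) = f_o(y). -/
open Matrix ComplexOrder

lemma quad_key {n : ℕ} (A : Matrix (Fin n) (Fin n) ℂ)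
    (x y : Fin n → ℂ) {a b : ℝ} (hab : a + b = 1) :
    (star (a • x + b • y) ⬝ᵥ A *ᵥ (a • x + b • y)).re
      = a * (star x ⬝ᵥ A *ᵥ x).re + b * (star y ⬝ᵥ A *ᵥ y).re
        - a * b * (star (x - y) ⬝ᵥ A *ᵥ (x - y)).re := by
  have h1 : star (a • x + b • y) ⬝ᵥ A *ᵥ (a • x + b • y)
      = a • a • (star x ⬝ᵥ A *ᵥ x) + a • b • (star x ⬝ᵥ A *ᵥ y)
        + b • a • (star y ⬝ᵥ A *ᵥ x) + b • b • (star y ⬝ᵥ A *ᵥ y) := by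
    simp only [star_add, star_smul, star_trivial, add_dotProduct, dotProduct_add,
      mulVec_add, mulVec_smul, smul_dotProduct, dotProduct_smul]
    ring_nf
    module
  have h2 : star (x - y) ⬝ᵥ A *ᵥ (x - y)
      = star x ⬝ᵥ A *ᵥ x - star x ⬝ᵥ A *ᵥ y - star y ⬝ᵥ A *ᵥ x + star y ⬝ᵥ A *ᵥ y := by
    simp only [star_sub, sub_dotProduct, dotProduct_sub, mulVec_sub]
    ring
  rw [h1, h2]
  simp only [Complex.add_re, Complex.sub_re, Complex.smul_re, smul_eq_mul]
  linear_combination (a * (star x ⬝ᵥ A *ᵥ x).re + b * (star y ⬝ᵥ A *ᵥ y).re) * hab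

lemma dot_sum_smul_re {n : ℕ} {J : Type} [Fintype J] (φ : J → ℝ)
    (A : J → Matrix (Fin n) (Fin n) ℂ) (v : Fin n → ℂ) :
    (star v ⬝ᵥ (∑ j, φ j • A j) *ᵥ v).re = ∑ j, φ j * (star v ⬝ᵥ (A j) *ᵥ v).re := by
  have h1 : (∑ j : J, φ j • A j) *ᵥ v = ∑ j : J, φ j • ((A j) *ᵥ v) := by
    ext i
    simp only [mulVec, dotProduct, Matrix.sum_apply, Matrix.smul_apply, Finset.sum_apply,
      Pi.smul_apply, Finset.sum_mul, smul_eq_mul, Complex.real_smul, Finset.mul_sum]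
    rw [Finset.sum_comm]
    exact Finset.sum_congr rfl fun j _ => Finset.sum_congr rfl fun k _ => by ring
  rw [h1]
  have h2 : star v ⬝ᵥ (∑ j : J, φ j • ((A j) *ᵥ v)) = ∑ j : J, φ j • (star v ⬝ᵥ (A j) *ᵥ v) := by
    simp only [dotProduct, Finset.sum_apply, Pi.smul_apply, Finset.mul_sum, smul_eq_mul,
      Complex.real_smul, Finset.sum_mul]
    rw [Finset.sum_comm]
    refine Finset.sum_congr rfl fun j _ => Finset.sum_congr rfl fun i _ => by ring
  rw [h2, Complex.re_sum]
  exact Finset.sum_congr rfl fun j _ => by rw [Complex.smul_re, smul_eq_mul]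

/-- Lemma 1. If the objective is affine (`A_o = 0`), then the Sion
function `S` agrees with the objective `f_o` on the convex hull of the feasible set. -/
theorem sion_eq_objective_on_convexHull
    (n : ℕ) (hn : 1 ≤ n) (J : Type) [Fintype J]
    (Ao : Matrix (Fin n) (Fin n) ℂ) (A : J → Matrix (Fin n) (Fin n) ℂ)
    (so : Fin n → ℂ) (s : J → Fin n → ℂ) (co : ℝ) (c : J → ℝ)
    (hAo : Ao.IsHermitian) (hA : ∀ j, (A j).IsHermitian)
    (hAo0 : Ao = 0)
    (fo : (Fin n → ℂ) → ℝ)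
    (hfo : ∀ x, fo x = 2 * (star so ⬝ᵥ x).re - (star x ⬝ᵥ Ao.mulVec x).re + co)
    (f : J → (Fin n → ℂ) → ℝ)
    (hf : ∀ j x, f j x = 2 * (star (s j) ⬝ᵥ x).re - (star x ⬝ᵥ (A j).mulVec x).re + c j)
    (L : (J → ℝ) → (Fin n → ℂ) → ℝ)
    (hL : ∀ φ x, L φ x = fo x + ∑ j, φ j * f j x)
    (Ψ : Set (J → ℝ))
    (hΨ : Ψ = {φ | (∀ j, 0 ≤ φ j) ∧ (Ao + ∑ j, φ j • A j).PosSemidef})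
    (hΨne : Ψ.Nonempty)
    (FP : Set (Fin n → ℂ))
    (hFP : FP = {x | ∀ j, 0 ≤ f j x})
    (y : Fin n → ℂ) (hy : y ∈ convexHull ℝ FP) :
    (⨅ φ ∈ Ψ, (L φ y : EReal)) = (fo y : EReal) := by
  subst hAo0
  have h0Ψ : (0 : J → ℝ) ∈ Ψ := by
    rw [hΨ]
    refine ⟨fun j => le_refl 0, ?_⟩
    have : ((0 : Matrix (Fin n) (Fin n) ℂ) + ∑ j, (0 : J → ℝ) j • A j)
        = (0 : Matrix (Fin n) (Fin n) ℂ) := by simp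
    rw [this]
    exact Matrix.PosSemidef.zero
  have hL0 : L 0 y = fo y := by simp [hL]
  refine le_antisymm ?_ ?_
  · calc (⨅ φ ∈ Ψ, (L φ y : EReal)) ≤ (L 0 y : EReal) := biInf_le _ h0Ψ
      _ = (fo y : EReal) := by rw [hL0]
  · refine le_iInf₂ fun φ hφ => ?_
    rw [hΨ] at hφ
    obtain ⟨hφ0, hPSD⟩ := hφ
    rw [zero_add] at hPSD
    rw [EReal.coe_le_coe_iff, hL]
    have hconc : ConcaveOn ℝ Set.univ (fun x => ∑ j, φ j * f j x) := by
      refine ⟨convex_univ, ?_⟩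
      intro x hx z hz a b ha hb hab
      simp only [smul_eq_mul]
      have hkey : ∀ j, f j (a • x + b • z)
          = a * f j x + b * f j z + a * b * (star (x - z) ⬝ᵥ (A j) *ᵥ (x - z)).re := by
        intro j
        rw [hf, hf, hf]
        have hlin : (star (s j) ⬝ᵥ (a • x + b • z)).re
            = a * (star (s j) ⬝ᵥ x).re + b * (star (s j) ⬝ᵥ z).re := by
          simp only [dotProduct_add, dotProduct_smul, Complex.add_re, Complex.smul_re,
            smul_eq_mul]
        rw [show (A j).mulVec = fun v => (A j) *ᵥ v from rfl]
        rw [quad_key (A j) x z hab, hlin]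
        linear_combination (-(c j)) * hab
      have hsum : (∑ j, φ j * f j (a • x + b • z))
          = a * (∑ j, φ j * f j x) + b * (∑ j, φ j * f j z)
            + a * b * (star (x - z) ⬝ᵥ (∑ j, φ j • A j) *ᵥ (x - z)).re := by
        rw [dot_sum_smul_re]
        simp only [hkey]
        rw [Finset.mul_sum, Finset.mul_sum, Finset.mul_sum, ← Finset.sum_add_distrib,
          ← Finset.sum_add_distrib]
        exact Finset.sum_congr rfl fun j _ => by ring
      rw [hsum]
      have hq : 0 ≤ (star (x - z) ⬝ᵥ (∑ j, φ j • A j) *ᵥ (x - z)).re := by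
        have := hPSD.re_dotProduct_nonneg (x - z)
        simpa using this
      nlinarith [mul_nonneg (mul_nonneg ha hb) hq]
    have hC : Convex ℝ {x | 0 ≤ ∑ j, φ j * f j x} := by
      have := hconc.convex_ge 0
      simpa using this
    have hsub : FP ⊆ {x | 0 ≤ ∑ j, φ j * f j x} := by
      rw [hFP]
      intro x hx
      exact Finset.sum_nonneg fun j _ => mul_nonneg (hφ0 j) (hx j)
    have hy' : 0 ≤ ∑ j, φ j * f j y := convexHull_min hsub hC hy
    linarith
end

section
/- Suppose φ* ∈ Ψ attains inf_{φ ∈ Ψ} D(φ) and x̃ ∈ F_κ attains sup_{x ∈ F_κ} S(x). Then L(φ*, x̃) = D(φ*), so x̃ maximizes L(φ*, ·) over F_κ; and for every x* ∈ F_κ that maximizes L(φ*, ·) over F_κ there exists k with A_{ψ*} k = 0 and x̃ = x* + k, where A_{ψ*} = A_o + Σ_j φ*_j A_j. -/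
open Matrix ComplexOrder

/-!
For `φ ∈ Ψ` the Lagrangian `L(φ, ·)` is a concave quadratic, `L(·, x)` is affine, and `F_κ` is
compact and convex: a nonempty bounded superlevel set `{f_κ ≥ 0}` forces `Σ κ_j A_j ⪰ 0`, so
`f_κ` is concave. Sion's minimax theorem then yields `x ∈ F_κ` with `D(φ*) ≤ L(φ, x)` for every
`φ ∈ Ψ`, whence `D(φ*) ≤ S(x) ≤ S(x̃) ≤ L(φ*, x̃) ≤ D(φ*)`. If `x̃` and `x*` both maximize
`L(φ*, ·)` on `F_κ`, its value at their midpoint exceeds the maximum by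
`¼ Re⟨x̃ - x*, A_{ψ*} (x̃ - x*)⟩ ≥ 0`, so this form vanishes and `x̃ - x* ∈ ker A_{ψ*}`.
-/

open Set

theorem Bornology.IsBounded.eq_zero_of_forall_add_smul_mem {E : Type*} [NormedAddCommGroup E]
    [NormedSpace ℝ E] {S : Set E} (hS : Bornology.IsBounded S) {x w : E}
    (h : ∀ t : ℝ, 0 ≤ t → x + t • w ∈ S) : w = 0 := by
  obtain ⟨C, hC⟩ := hS.exists_norm_le
  have hx : ‖x‖ ≤ C := hC x (by simpa using h 0 le_rfl)
  have hray : ∀ t : ℝ, 0 ≤ t → t * ‖w‖ ≤ 2 * C := fun t ht => by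
    have := norm_sub_le (x + t • w) x
    rw [add_sub_cancel_left, norm_smul, Real.norm_of_nonneg ht] at this
    linarith [hC _ (h t ht)]
  by_contra hw
  have hw' : 0 < ‖w‖ := norm_pos_iff.2 hw
  have := hray ((2 * C + 1) / ‖w‖) (div_nonneg (by linarith [norm_nonneg x]) hw'.le)
  rw [div_mul_cancel₀ _ hw'.ne'] at this
  linarith

section QuadObjective

variable {ι : Type*} [Fintype ι]

noncomputable def quadObjective (M : Matrix ι ι ℂ) (s : ι → ℂ) (c : ℝ) (x : ι → ℂ) : ℝ :=
  2 * (star s ⬝ᵥ x).re - (star x ⬝ᵥ M *ᵥ x).re + c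

theorem quadObjective_add (M₁ M₂ : Matrix ι ι ℂ) (s₁ s₂ : ι → ℂ) (c₁ c₂ : ℝ) (x : ι → ℂ) :
    quadObjective M₁ s₁ c₁ x + quadObjective M₂ s₂ c₂ x =
      quadObjective (M₁ + M₂) (s₁ + s₂) (c₁ + c₂) x := by
  simp only [quadObjective, star_add, add_dotProduct, add_mulVec, dotProduct_add, Complex.add_re]
  ring

theorem sum_mul_quadObjective {J : Type*} (t : Finset J) (w : J → ℝ) (A : J → Matrix ι ι ℂ)
    (s : J → ι → ℂ) (c : J → ℝ) (x : ι → ℂ) :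
    ∑ j ∈ t, w j * quadObjective (A j) (s j) (c j) x =
      quadObjective (∑ j ∈ t, w j • A j) (∑ j ∈ t, w j • s j) (∑ j ∈ t, w j * c j) x := by
  simp only [quadObjective, star_sum, sum_mulVec, dotProduct_sum, sum_dotProduct, Complex.re_sum,
    star_smul, star_trivial, smul_mulVec, dotProduct_smul, smul_dotProduct, Complex.smul_re,
    smul_eq_mul, Finset.mul_sum, ← Finset.sum_sub_distrib, ← Finset.sum_add_distrib]
  exact Finset.sum_congr rfl fun j _ => by ring

variable {M : Matrix ι ι ℂ} {s : ι → ℂ} {c : ℝ}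

theorem quadObjective_add_smul (hM : M.IsHermitian) (x w : ι → ℂ) (t : ℝ) :
    quadObjective M s c (x + t • w) = quadObjective M s c x + 2 * t * (star w ⬝ᵥ (s - M *ᵥ x)).re
      - t ^ 2 * (star w ⬝ᵥ M *ᵥ w).re := by
  have hsym : ∀ a b : ι → ℂ, (star a ⬝ᵥ b).re = (star b ⬝ᵥ a).re := fun a b => by
    rw [← Complex.conj_re, ← Complex.star_def, star_dotProduct, star_star]
  have hMsym : (star x ⬝ᵥ M *ᵥ w).re = (star w ⬝ᵥ M *ᵥ x).re := by
    rw [← Complex.conj_re, ← Complex.star_def, star_dotProduct, star_star, star_mulVec,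
      ← dotProduct_mulVec, hM.eq]
  simp only [quadObjective, star_add, star_smul, star_trivial, mulVec_add, mulVec_smul,
    add_dotProduct, dotProduct_add, smul_dotProduct, dotProduct_smul, dotProduct_sub,
    Complex.add_re, Complex.sub_re, Complex.smul_re, smul_eq_mul, hMsym, hsym s w]
  ring

theorem re_star_dotProduct_mulVec_nonneg (hM : M.PosSemidef) (v : ι → ℂ) :
    0 ≤ (star v ⬝ᵥ M *ᵥ v).re := by
  simpa using hM.re_dotProduct_nonneg v

theorem concaveOn_quadObjective (hM : M.PosSemidef) : ConcaveOn ℝ univ (quadObjective M s c) := by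
  refine ⟨convex_univ, fun x _ y _ a b ha hb hab => ?_⟩
  obtain rfl : b = 1 - a := by linarith
  have hx := quadObjective_add_smul hM.1 (s := s) (c := c) y (x - y) 1
  rw [one_smul, add_sub_cancel] at hx
  rw [show a • x + (1 - a) • y = y + a • (x - y) by module, quadObjective_add_smul hM.1,
    smul_eq_mul, smul_eq_mul, hx]
  nlinarith [mul_nonneg (mul_nonneg ha hb) (re_star_dotProduct_mulVec_nonneg hM (x - y))]

theorem continuous_quadObjective : Continuous (quadObjective M s c) := by
  unfold quadObjective
  fun_prop

theorem posSemidef_of_isBounded (hM : M.IsHermitian)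
    (hne : {x | 0 ≤ quadObjective M s c x}.Nonempty)
    (hbd : Bornology.IsBounded {x | 0 ≤ quadObjective M s c x}) : M.PosSemidef := by
  refine .of_dotProduct_mulVec_nonneg hM fun v => Complex.nonneg_iff.2
    ⟨?_, by simpa using (hM.im_star_dotProduct_mulVec_self v).symm⟩
  by_contra! hneg
  -- The ray `x + t • w`, `t ≥ 0`, with `w = ±v` chosen so that the linear term is nonnegative,
  -- would lie in the bounded set.
  obtain ⟨x, hx⟩ := hne
  have hray : ∀ w : ι → ℂ, (star w ⬝ᵥ M *ᵥ w).re < 0 → 0 ≤ (star w ⬝ᵥ (s - M *ᵥ x)).re →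
      w = 0 := fun w hw hR => hbd.eq_zero_of_forall_add_smul_mem fun t ht => by
    simp only [mem_ofPred_eq, quadObjective_add_smul hM] at hx ⊢
    nlinarith [mul_nonneg ht hR, mul_nonneg (sq_nonneg t) (neg_nonneg.2 hw.le)]
  have hv : v ≠ 0 := by rintro rfl; simp at hneg
  rcases le_total 0 (star v ⬝ᵥ (s - M *ᵥ x)).re with hR | hR
  · exact hv (hray v hneg hR)
  · exact hv (neg_eq_zero.1 (hray (-v) (by simpa [mulVec_neg] using hneg) (by simpa using hR)))

theorem convex_setOf_quadObjective_nonneg (hM : M.IsHermitian)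
    (hne : {x | 0 ≤ quadObjective M s c x}.Nonempty)
    (hbd : Bornology.IsBounded {x | 0 ≤ quadObjective M s c x}) :
    Convex ℝ {x | 0 ≤ quadObjective M s c x} := by
  simpa using (concaveOn_quadObjective (posSemidef_of_isBounded hM hne hbd)).convex_ge 0

theorem mulVec_sub_eq_zero_of_isMaxOn (hM : M.PosSemidef) {X : Set (ι → ℂ)} (hX : Convex ℝ X)
    {a b : ι → ℂ} (ha : a ∈ X) (hb : b ∈ X) (hamax : IsMaxOn (quadObjective M s c) X a)
    (hbmax : IsMaxOn (quadObjective M s c) X b) : M *ᵥ (a - b) = 0 := by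
  have hmid : b + (1 / 2 : ℝ) • (a - b) ∈ X := hX.add_smul_sub_mem hb ha ⟨by norm_num, by norm_num⟩
  have hqa := quadObjective_add_smul hM.1 (s := s) (c := c) b (a - b) 1
  rw [one_smul, add_sub_cancel] at hqa
  have hqmid := quadObjective_add_smul hM.1 (s := s) (c := c) b (a - b) (1 / 2)
  have hQ : (star (a - b) ⬝ᵥ M *ᵥ (a - b)).re = 0 := by
    have := isMaxOn_iff.1 hamax _ hmid
    have := isMaxOn_iff.1 hamax _ hb
    have := isMaxOn_iff.1 hbmax _ ha
    linarith [re_star_dotProduct_mulVec_nonneg hM (a - b)]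
  exact (hM.dotProduct_mulVec_zero_iff _).1 <|
    Complex.ext hQ (by simpa using hM.1.im_star_dotProduct_mulVec_self (a - b))

end QuadObjective

theorem isHermitian_sum_smul {ι J : Type*} [Fintype J] {A : J → Matrix ι ι ℂ}
    (hA : ∀ j, (A j).IsHermitian) (w : J → ℝ) : (∑ j, w j • A j).IsHermitian :=
  isSelfAdjoint_sum _ fun j _ => (hA j).smul (IsSelfAdjoint.all (w j))

theorem convex_setOf_nonneg_and_posSemidef {ι J : Type*} [Fintype ι] [Fintype J]
    (M : Matrix ι ι ℂ) (A : J → Matrix ι ι ℂ) :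
    Convex ℝ {φ : J → ℝ | (∀ j, 0 ≤ φ j) ∧ (M + ∑ j, φ j • A j).PosSemidef} := by
  rintro φ ⟨hφ, hφM⟩ ψ ⟨hψ, hψM⟩ a b ha hb hab
  refine ⟨fun j => add_nonneg (mul_nonneg ha (hφ j)) (mul_nonneg hb (hψ j)), ?_⟩
  convert (hφM.smul ha).add (hψM.smul hb) using 1
  simp only [Pi.add_apply, Pi.smul_apply, smul_eq_mul, add_smul, mul_smul, Finset.sum_add_distrib,
    smul_add, Finset.smul_sum]
  nth_rewrite 1 [← one_smul ℝ M, ← hab, add_smul]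
  abel

theorem convexOn_add_sum_mul {J : Type*} [Fintype J] {Y : Set (J → ℝ)} (hY : Convex ℝ Y) (a : ℝ)
    (b : J → ℝ) : ConvexOn ℝ Y fun φ => a + ∑ j, φ j * b j := by
  refine ⟨hY, fun φ _ ψ _ p q _ _ hpq => le_of_eq ?_⟩
  simp only [Pi.add_apply, Pi.smul_apply, smul_eq_mul, add_mul, Finset.sum_add_distrib, mul_assoc,
    ← Finset.mul_sum]
  linear_combination (-a) * hpq

section Minimax

variable {E F : Type*} [TopologicalSpace E] [AddCommGroup E] [Module ℝ E]
  [IsTopologicalAddGroup E] [ContinuousSMul ℝ E] [TopologicalSpace F] [AddCommGroup F]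
  [Module ℝ F] [IsTopologicalAddGroup F] [ContinuousSMul ℝ F] {X : Set E} {Y : Set F}

theorem exists_forall_le_of_forall_exists_le {β : Type*} [LinearOrder β] [DenselyOrdered β]
    {L : F → E → β} (ne_X : X.Nonempty) (kX : IsCompact X) (cX : Convex ℝ X) (cY : Convex ℝ Y)
    (hLy : ∀ y ∈ Y, UpperSemicontinuousOn (L y) X) (hLy' : ∀ y ∈ Y, QuasiconcaveOn ℝ X (L y))
    (hLx : ∀ x ∈ X, LowerSemicontinuousOn (L · x) Y)
    (hLx' : ∀ x ∈ X, QuasiconvexOn ℝ Y (L · x)) {t : β}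
    (h : ∀ y ∈ Y, ∃ x ∈ X, t ≤ L y x) : ∃ x ∈ X, ∀ y ∈ Y, t ≤ L y x := by
  by_contra! hlt
  obtain ⟨u, hu⟩ := (UpperSemicontinuousOn.inter_biInter_preimage_Ici_eq_empty_iff_exists_finset
    kX hLy (c := t)).1 <| eq_empty_of_forall_notMem fun x ⟨hx, hxY⟩ => by
      obtain ⟨y, hy, hyt⟩ := hlt x hx
      exact (mem_iInter₂.1 hxY y hy).not_gt hyt
  -- Mathlib's Sion lemmas take infima over the compact variable; `βᵒᵈ` swaps the roles.
  obtain ⟨y, hy, hyt⟩ := Sion.exists_lt_iInf_of_lt_iInf_of_finite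
    (f := fun x y => OrderDual.toDual (L y x)) ne_X kX hLy (fun y hy => (hLy' y hy).dual) cY hLx
    (fun x hx => (hLx' x hx).dual) cX (u.finite_toSet.image Subtype.val) (by simp)
    (t := OrderDual.toDual t) fun x hx => by
      obtain ⟨y, hyu, hyt⟩ := hu x hx
      exact ⟨y, mem_image_of_mem _ hyu, hyt⟩
  obtain ⟨x, hx, hxt⟩ := h y hy
  exact (hyt x hx).not_ge hxt

theorem isGreatest_image_of_isMinOn_of_isMaxOn {L : F → E → ℝ}
    (ne_X : X.Nonempty) (kX : IsCompact X) (cX : Convex ℝ X) (cY : Convex ℝ Y)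
    (hLy : ∀ y ∈ Y, UpperSemicontinuousOn (L y) X) (hLy' : ∀ y ∈ Y, QuasiconcaveOn ℝ X (L y))
    (hLx : ∀ x ∈ X, LowerSemicontinuousOn (L · x) Y)
    (hLx' : ∀ x ∈ X, QuasiconvexOn ℝ Y (L · x))
    {y₀ : F} (hy₀ : y₀ ∈ Y) (hmin : IsMinOn (fun y => sSup (L y '' X)) Y y₀)
    {x₀ : E} (hx₀ : x₀ ∈ X) (hmax : IsMaxOn (fun x => ⨅ y ∈ Y, (L y x : EReal)) X x₀) :
    IsGreatest (L y₀ '' X) (L y₀ x₀) := by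
  have hgreatest : ∀ y ∈ Y, ∃ a ∈ X, IsGreatest (L y '' X) (L y a) := fun y hy => by
    obtain ⟨a, ha, hamax⟩ := (hLy y hy).exists_isMaxOn ne_X kX
    exact ⟨a, ha, mem_image_of_mem _ ha, forall_mem_image.2 fun x hx => hamax hx⟩
  obtain ⟨a, ha, ha₀⟩ := hgreatest y₀ hy₀
  obtain ⟨x, hx, hxY⟩ := exists_forall_le_of_forall_exists_le ne_X kX cX cY hLy hLy' hLx hLx'
    (t := L y₀ a) fun y hy => by
      obtain ⟨b, hb, hbmax⟩ := hgreatest y hy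
      refine ⟨b, hb, ?_⟩
      simpa [ha₀.csSup_eq, hbmax.csSup_eq] using isMinOn_iff.1 hmin y hy
  have hax₀ : (L y₀ a : EReal) ≤ L y₀ x₀ := calc
    (L y₀ a : EReal) ≤ ⨅ y ∈ Y, (L y x : EReal) :=
      le_iInf₂ fun y hy => EReal.coe_le_coe (hxY y hy)
    _ ≤ ⨅ y ∈ Y, (L y x₀ : EReal) := isMaxOn_iff.1 hmax x hx
    _ ≤ L y₀ x₀ := iInf₂_le y₀ hy₀
  exact ⟨mem_image_of_mem _ hx₀, fun z hz => (ha₀.2 hz).trans (EReal.coe_le_coe_iff.1 hax₀)⟩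

end Minimax

theorem sion_maximizer_vs_dual_maximizer_general
    (n : ℕ) (J : Type) [Fintype J]
    (Ao : Matrix (Fin n) (Fin n) ℂ) (A : J → Matrix (Fin n) (Fin n) ℂ)
    (so : Fin n → ℂ) (s : J → Fin n → ℂ) (co : ℝ) (c : J → ℝ)
    (hA : ∀ j, (A j).IsHermitian)
    (fo : (Fin n → ℂ) → ℝ)
    (hfo : ∀ x, fo x = 2 * (star so ⬝ᵥ x).re - (star x ⬝ᵥ Ao.mulVec x).re + co)
    (f : J → (Fin n → ℂ) → ℝ)
    (hf : ∀ j x, f j x = 2 * (star (s j) ⬝ᵥ x).re - (star x ⬝ᵥ (A j).mulVec x).re + c j)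
    (L : (J → ℝ) → (Fin n → ℂ) → ℝ)
    (hL : ∀ φ x, L φ x = fo x + ∑ j, φ j * f j x)
    (Ψ : Set (J → ℝ))
    (hΨ : Ψ = {φ | (∀ j, 0 ≤ φ j) ∧ (Ao + ∑ j, φ j • A j).PosSemidef})
    (κ : J → ℝ)
    (Fκ : Set (Fin n → ℂ))
    (hFκ : Fκ = {x | 0 ≤ ∑ j, κ j * f j x})
    (hFκne : Fκ.Nonempty) (hFκcpt : IsCompact Fκ)
    (D : (J → ℝ) → ℝ)
    (hD : ∀ φ, D φ = sSup ((fun x => L φ x) '' Fκ))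
    (S : (Fin n → ℂ) → EReal)
    (hS : ∀ x, S x = ⨅ φ ∈ Ψ, (L φ x : EReal))
    (φs : J → ℝ) (hφsΨ : φs ∈ Ψ)
    (hφsmin : ∀ φ ∈ Ψ, D φs ≤ D φ)
    (xt : Fin n → ℂ) (hxt : xt ∈ Fκ)
    (hxtmax : ∀ x ∈ Fκ, S x ≤ S xt) :
    L φs xt = D φs ∧
    (∀ x ∈ Fκ, L φs x ≤ L φs xt) ∧
    (∀ xs ∈ Fκ, (∀ x ∈ Fκ, L φs x ≤ L φs xs) →
      ∃ k : Fin n → ℂ, (Ao + ∑ j, φs j • A j).mulVec k = 0 ∧ xt = xs + k) := by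
  obtain rfl : fo = quadObjective Ao so co := funext hfo
  obtain rfl : f = fun j => quadObjective (A j) (s j) (c j) := funext₂ hf
  have hLq : ∀ φ, L φ = quadObjective (Ao + ∑ j, φ j • A j) (so + ∑ j, φ j • s j)
      (co + ∑ j, φ j * c j) := fun φ => funext fun x => by
    rw [hL, sum_mul_quadObjective, quadObjective_add]
  have hFq : Fκ =
      {x | 0 ≤ quadObjective (∑ j, κ j • A j) (∑ j, κ j • s j) (∑ j, κ j * c j) x} := by
    simp_rw [hFκ, sum_mul_quadObjective]
  have cF : Convex ℝ Fκ := hFq ▸ convex_setOf_quadObjective_nonneg (isHermitian_sum_smul hA κ)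
    (hFq ▸ hFκne) (hFq ▸ hFκcpt).isBounded
  have cΨ : Convex ℝ Ψ := hΨ ▸ convex_setOf_nonneg_and_posSemidef Ao A
  have hpsd : ∀ φ ∈ Ψ, (Ao + ∑ j, φ j • A j).PosSemidef := fun φ hφ => (hΨ ▸ hφ).2
  have hsaddle : IsGreatest (L φs '' Fκ) (L φs xt) :=
    isGreatest_image_of_isMinOn_of_isMaxOn hFκne hFκcpt cF cΨ
      (fun φ _ => (hLq φ ▸ continuous_quadObjective).continuousOn.upperSemicontinuousOn)
      (fun φ hφ => hLq φ ▸
        ((concaveOn_quadObjective (hpsd φ hφ)).subset (subset_univ _) cF).quasiconcaveOn)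
      (fun x _ => by
        simp_rw [hL]; exact (by fun_prop : Continuous _).continuousOn.lowerSemicontinuousOn)
      (fun x _ => by simp_rw [hL]; exact (convexOn_add_sum_mul cΨ _ _).quasiconvexOn)
      hφsΨ (fun φ hφ => by simpa [hD] using hφsmin φ hφ)
      hxt (fun x hx => by simpa [hS] using hxtmax x hx)
  refine ⟨by rw [hD, hsaddle.csSup_eq], fun x hx => hsaddle.2 (mem_image_of_mem _ hx),
    fun xs hxs hxsmax => ⟨xt - xs, ?_, by abel⟩⟩
  rw [hLq] at hsaddle hxsmax
  exact mulVec_sub_eq_zero_of_isMaxOn (hpsd φs hφsΨ) cF hxt hxs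
    (fun x hx => hsaddle.2 (mem_image_of_mem _ hx)) hxsmax

/-- Lemma 2. If `φ*` minimizes the dual `D` over `Ψ` and `x̃ ∈ Fκ`
maximizes the Sion function `S` over `Fκ`, then `L(φ*, x̃) = D(φ*)` (so `x̃` maximizes
`L(φ*, ·)` over `Fκ`), and `x̃` differs from any maximizer `x*` of `L(φ*, ·)` over `Fκ`
by an element of the kernel of `A_{ψ*} = A_o + Σ_j φ*_j A_j`. -/
theorem sion_maximizer_vs_dual_maximizer
    (n : ℕ) (hn : 1 ≤ n) (J : Type) [Fintype J]
    (Ao : Matrix (Fin n) (Fin n) ℂ) (A : J → Matrix (Fin n) (Fin n) ℂ)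
    (so : Fin n → ℂ) (s : J → Fin n → ℂ) (co : ℝ) (c : J → ℝ)
    (hAo : Ao.IsHermitian) (hA : ∀ j, (A j).IsHermitian)
    (fo : (Fin n → ℂ) → ℝ)
    (hfo : ∀ x, fo x = 2 * (star so ⬝ᵥ x).re - (star x ⬝ᵥ Ao.mulVec x).re + co)
    (f : J → (Fin n → ℂ) → ℝ)
    (hf : ∀ j x, f j x = 2 * (star (s j) ⬝ᵥ x).re - (star x ⬝ᵥ (A j).mulVec x).re + c j)
    (L : (J → ℝ) → (Fin n → ℂ) → ℝ)
    (hL : ∀ φ x, L φ x = fo x + ∑ j, φ j * f j x)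
    (Ψ : Set (J → ℝ))
    (hΨ : Ψ = {φ | (∀ j, 0 ≤ φ j) ∧ (Ao + ∑ j, φ j • A j).PosSemidef})
    (hΨne : Ψ.Nonempty)
    (κ : J → ℝ) (hκ : ∀ j, 0 ≤ κ j)
    (Fκ : Set (Fin n → ℂ))
    (hFκ : Fκ = {x | 0 ≤ ∑ j, κ j * f j x})
    (hFκne : Fκ.Nonempty) (hFκcpt : IsCompact Fκ)
    (D : (J → ℝ) → ℝ)
    (hD : ∀ φ, D φ = sSup ((fun x => L φ x) '' Fκ))
    (S : (Fin n → ℂ) → EReal)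
    (hS : ∀ x, S x = ⨅ φ ∈ Ψ, (L φ x : EReal))
    (φs : J → ℝ) (hφsΨ : φs ∈ Ψ)
    (hφsmin : ∀ φ ∈ Ψ, D φs ≤ D φ)
    (xt : Fin n → ℂ) (hxt : xt ∈ Fκ)
    (hxtmax : ∀ x ∈ Fκ, S x ≤ S xt) :
    L φs xt = D φs ∧
    (∀ x ∈ Fκ, L φs x ≤ L φs xt) ∧
    (∀ xs ∈ Fκ, (∀ x ∈ Fκ, L φs x ≤ L φs xs) →
      ∃ k : Fin n → ℂ, (Ao + ∑ j, φs j • A j).mulVec k = 0 ∧ xt = xs + k) :=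
  sion_maximizer_vs_dual_maximizer_general n J Ao A so s co c hA fo hfo f hf L hL Ψ hΨ κ Fκ hFκ
    hFκne hFκcpt D hD S hS φs hφsΨ hφsmin xt hxt hxtmax
end

section
/- Suppose there exists δ > 0 such that for every φ : J → ℝ with φ_j ≥ 0 for all j and ‖φ‖ = 1 (Euclidean norm on ℝ^J), sup_{x ∈ F_κ} f_φ(x) ≥ δ. Let l = inf_{x ∈ F_κ} f_o(x). Then: (i) for every φ ∈ Ψ, D(φ) ≥ l + δ·‖φ‖ (so D is coercive on Ψ); (ii) the infimum of D over Ψ is attained at some φ* ∈ Ψ; and (iii) for any fixed φ₀ ∈ Ψ, setting b = (D(φ₀) − l)/δ, every minimizer φ* of D over Ψ satisfies ‖φ*‖ ≤ b, so that inf_{φ ∈ Ψ} D(φ) = min over the bounded set Ψ^b = {φ ∈ Ψ | ‖φ‖ ≤ b} of D. -/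
open Matrix ComplexOrder

/-!
Writing `φ = ‖φ‖ ψ` with `‖ψ‖ = 1`, positive homogeneity of the supremum turns the hypothesis on
unit directions into `sup_{F_κ} f_φ ≥ δ‖φ‖`; evaluating `L(φ, ·)` at a maximiser of `f_φ` then
gives `D(φ) ≥ l + δ‖φ‖`. The dual function is a supremum over a compact set of functions jointly
continuous in `(φ, x)`, hence continuous, and `Ψ` is closed because the positive semidefinite cone
is. Coercivity confines every `φ` with `D(φ) ≤ D(φ₀)` to the compact set `Ψ^b`, where `D` attains
its minimum.
-/

theorem Matrix.isClosed_setOf_posSemidef {𝕜 n : Type*} [RCLike 𝕜] [Fintype n] :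
    IsClosed {M : Matrix n n 𝕜 | M.PosSemidef} := by
  have h : {M : Matrix n n 𝕜 | M.PosSemidef} =
      {M | Mᴴ = M} ∩ ⋂ x : n → 𝕜, {M | 0 ≤ star x ⬝ᵥ (M *ᵥ x)} := by
    ext M
    simp [posSemidef_iff_dotProduct_mulVec, IsHermitian]
  rw [h]
  exact (isClosed_eq continuous_id.matrix_conjTranspose continuous_id).inter <|
    isClosed_iInter fun x => isClosed_le continuous_const
      (continuous_const.dotProduct (continuous_id.matrix_mulVec continuous_const))

theorem IsMinOn.isLeast_image {α β : Type*} [Preorder β] {f : α → β} {s : Set α} {a : α}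
    (h : IsMinOn f s a) (ha : a ∈ s) : IsLeast (f '' s) (f a) :=
  ⟨Set.mem_image_of_mem f ha, Set.forall_mem_image.2 h⟩

section EuclideanNorm

variable {J : Type*} [Fintype J]

theorem sqrt_sum_sq_eq_norm_toLp (φ : J → ℝ) : √(∑ j, φ j ^ 2) = ‖WithLp.toLp 2 φ‖ := by
  simp [EuclideanSpace.norm_eq]

theorem isCompact_setOf_sqrt_sum_sq_le (b : ℝ) :
    IsCompact {φ : J → ℝ | √(∑ j, φ j ^ 2) ≤ b} := by
  have h : {φ : J → ℝ | √(∑ j, φ j ^ 2) ≤ b} =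
      (PiLp.homeomorph 2 fun _ : J => ℝ).symm ⁻¹' Metric.closedBall 0 b := by
    ext φ
    simp only [Set.mem_ofPred_eq, sqrt_sum_sq_eq_norm_toLp, Set.mem_preimage,
      mem_closedBall_zero_iff]
    rfl
  rw [h, Homeomorph.isCompact_preimage]
  exact isCompact_closedBall 0 b

end EuclideanNorm

section WeightedSums

open scoped Pointwise

variable {X J : Type*} [Fintype J] {f : J → X → ℝ} {K : Set X}

theorem mul_sqrt_sum_sq_le_sSup_of_unit {δ : ℝ}
    (hunit : ∀ ψ : J → ℝ, (∀ j, 0 ≤ ψ j) → √(∑ j, ψ j ^ 2) = 1 →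
      δ ≤ sSup ((fun x => ∑ j, ψ j * f j x) '' K))
    {φ : J → ℝ} (hφ : ∀ j, 0 ≤ φ j) :
    δ * √(∑ j, φ j ^ 2) ≤ sSup ((fun x => ∑ j, φ j * f j x) '' K) := by
  rw [sqrt_sum_sq_eq_norm_toLp]
  rcases (norm_nonneg (WithLp.toLp 2 φ)).eq_or_lt with hr | hr
  · have hφ0 : φ = 0 := by simpa using hr.symm
    rw [← hr, mul_zero]
    exact Real.sSup_nonneg (by simp [hφ0])
  set r := ‖WithLp.toLp 2 φ‖
  set ψ := r⁻¹ • φ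
  have hψ : √(∑ j, ψ j ^ 2) = 1 := by
    rw [sqrt_sum_sq_eq_norm_toLp, WithLp.toLp_smul, norm_smul, Real.norm_eq_abs,
      abs_of_pos (inv_pos.2 hr), inv_mul_cancel₀ hr.ne']
  have himage : (fun x => ∑ j, φ j * f j x) '' K = r • ((fun x => ∑ j, ψ j * f j x) '' K) := by
    rw [← Set.image_smul, Set.image_image]
    congr 1
    funext x
    simp only [ψ, Pi.smul_apply, smul_eq_mul, Finset.mul_sum, ← mul_assoc,
      mul_inv_cancel₀ hr.ne', one_mul]
  rw [himage, Real.sSup_smul_of_nonneg hr.le, smul_eq_mul, mul_comm]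
  exact mul_le_mul_of_nonneg_left (hunit ψ (fun j => mul_nonneg (inv_nonneg.2 hr.le) (hφ j)) hψ)
    hr.le

variable [TopologicalSpace X]

theorem sInf_add_sSup_le_sSup_add (hK : IsCompact K) (hKne : K.Nonempty) {g h : X → ℝ}
    (hg : Continuous g) (hh : Continuous h) :
    sInf (g '' K) + sSup (h '' K) ≤ sSup ((fun x => g x + h x) '' K) := by
  obtain ⟨x, hx, hmax⟩ := hK.exists_isMaxOn hKne hh.continuousOn
  have hsup : sSup (h '' K) = h x :=
    IsGreatest.csSup_eq ⟨Set.mem_image_of_mem h hx, Set.forall_mem_image.2 hmax⟩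
  calc sInf (g '' K) + sSup (h '' K) ≤ g x + h x := by
        rw [hsup]
        exact add_le_add_left (csInf_le (hK.image hg).bddBelow (Set.mem_image_of_mem g hx)) _
    _ ≤ sSup ((fun x => g x + h x) '' K) :=
        le_csSup (hK.image (hg.add hh)).bddAbove (Set.mem_image_of_mem _ hx)

theorem sInf_add_mul_sqrt_sum_sq_le_sSup_lagrangian (hK : IsCompact K) (hKne : K.Nonempty)
    {fo : X → ℝ} (hfo : Continuous fo) (hf : ∀ j, Continuous (f j)) {δ : ℝ}
    (hunit : ∀ ψ : J → ℝ, (∀ j, 0 ≤ ψ j) → √(∑ j, ψ j ^ 2) = 1 →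
      δ ≤ sSup ((fun x => ∑ j, ψ j * f j x) '' K))
    {φ : J → ℝ} (hφ : ∀ j, 0 ≤ φ j) :
    sInf (fo '' K) + δ * √(∑ j, φ j ^ 2) ≤ sSup ((fun x => fo x + ∑ j, φ j * f j x) '' K) :=
  (add_le_add_right (mul_sqrt_sum_sq_le_sSup_of_unit hunit hφ) _).trans
    (sInf_add_sSup_le_sSup_add hK hKne hfo (by fun_prop))

theorem continuous_sSup_lagrangian (hK : IsCompact K) {fo : X → ℝ} (hfo : Continuous fo)
    (hf : ∀ j, Continuous (f j)) :
    Continuous fun φ : J → ℝ => sSup ((fun x => fo x + ∑ j, φ j * f j x) '' K) :=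
  hK.continuous_sSup (by fun_prop)

end WeightedSums

section Coercive

variable {E : Type*} {Ψ : Set E} {D ν : E → ℝ} {l δ : ℝ}

theorem le_div_of_coercive (hδ : 0 < δ) (hcoer : ∀ φ ∈ Ψ, l + δ * ν φ ≤ D φ) {φ φ₀ : E}
    (hφ : φ ∈ Ψ) (hle : D φ ≤ D φ₀) : ν φ ≤ (D φ₀ - l) / δ := by
  rw [le_div_iff₀ hδ]
  linarith [hcoer φ hφ]

theorem exists_isMinOn_of_coercive [TopologicalSpace E] (hδ : 0 < δ)
    (hcoer : ∀ φ ∈ Ψ, l + δ * ν φ ≤ D φ) (hΨ : IsClosed Ψ) (hne : Ψ.Nonempty)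
    (hD : ContinuousOn D Ψ) (hν : ∀ b, IsCompact {φ | ν φ ≤ b}) :
    ∃ φs ∈ Ψ, IsMinOn D Ψ φs := by
  obtain ⟨φ₀, hφ₀⟩ := hne
  have hK : IsCompact {φ ∈ Ψ | ν φ ≤ (D φ₀ - l) / δ} := (hν _).inter_left hΨ
  have hφ₀K : φ₀ ∈ {φ ∈ Ψ | ν φ ≤ (D φ₀ - l) / δ} :=
    ⟨hφ₀, le_div_of_coercive hδ hcoer hφ₀ le_rfl⟩
  obtain ⟨φs, hφsK, hmin⟩ := hK.exists_isMinOn ⟨φ₀, hφ₀K⟩ (hD.mono (Set.sep_subset _ _))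
  refine ⟨φs, hφsK.1, fun φ hφ => ?_⟩
  rcases le_total (D φ) (D φ₀) with h | h
  · exact hmin ⟨hφ, le_div_of_coercive hδ hcoer hφ h⟩
  · exact (hmin hφ₀K).trans h

theorem sInf_image_eq_sInf_image_sep_of_coercive (hδ : 0 < δ)
    (hcoer : ∀ φ ∈ Ψ, l + δ * ν φ ≤ D φ) {φs φ₀ : E} (hφs : φs ∈ Ψ) (hmin : IsMinOn D Ψ φs)
    (hφ₀ : φ₀ ∈ Ψ) :
    sInf (D '' Ψ) = sInf (D '' {φ ∈ Ψ | ν φ ≤ (D φ₀ - l) / δ}) := by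
  have hφsK : φs ∈ {φ ∈ Ψ | ν φ ≤ (D φ₀ - l) / δ} :=
    ⟨hφs, le_div_of_coercive hδ hcoer hφs (hmin hφ₀)⟩
  rw [(hmin.isLeast_image hφs).csInf_eq,
    ((hmin.on_subset (Set.sep_subset _ _)).isLeast_image hφsK).csInf_eq]

end Coercive

theorem dual_coercive_and_bounded_multipliers_general
    (n : ℕ) (J : Type) [Fintype J]
    (Ao : Matrix (Fin n) (Fin n) ℂ) (A : J → Matrix (Fin n) (Fin n) ℂ)
    (so : Fin n → ℂ) (s : J → Fin n → ℂ) (co : ℝ) (c : J → ℝ)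
    (fo : (Fin n → ℂ) → ℝ)
    (hfo : ∀ x, fo x = 2 * (star so ⬝ᵥ x).re - (star x ⬝ᵥ Ao.mulVec x).re + co)
    (f : J → (Fin n → ℂ) → ℝ)
    (hf : ∀ j x, f j x = 2 * (star (s j) ⬝ᵥ x).re - (star x ⬝ᵥ (A j).mulVec x).re + c j)
    (L : (J → ℝ) → (Fin n → ℂ) → ℝ)
    (hL : ∀ φ x, L φ x = fo x + ∑ j, φ j * f j x)
    (Ψ : Set (J → ℝ))
    (hΨ : Ψ = {φ | (∀ j, 0 ≤ φ j) ∧ (Ao + ∑ j, φ j • A j).PosSemidef})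
    (hΨne : Ψ.Nonempty)
    (Fκ : Set (Fin n → ℂ))
    (hFκne : Fκ.Nonempty) (hFκcpt : IsCompact Fκ)
    (D : (J → ℝ) → ℝ)
    (hD : ∀ φ, D φ = sSup ((fun x => L φ x) '' Fκ))
    (δ : ℝ) (hδ : 0 < δ)
    (hsphere : ∀ φ : J → ℝ, (∀ j, 0 ≤ φ j) → Real.sqrt (∑ j, φ j ^ 2) = 1 →
      δ ≤ sSup ((fun x => ∑ j, φ j * f j x) '' Fκ))
    (l : ℝ) (hl : l = sInf (fo '' Fκ)) :
    (∀ φ ∈ Ψ, l + δ * Real.sqrt (∑ j, φ j ^ 2) ≤ D φ) ∧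
    (∃ φs ∈ Ψ, ∀ φ ∈ Ψ, D φs ≤ D φ) ∧
    (∀ φ₀ ∈ Ψ, ∀ φs ∈ Ψ, (∀ φ ∈ Ψ, D φs ≤ D φ) →
      Real.sqrt (∑ j, φs j ^ 2) ≤ (D φ₀ - l) / δ) ∧
    (∀ φ₀ ∈ Ψ,
      sInf (D '' Ψ) =
        sInf (D '' {φ ∈ Ψ | Real.sqrt (∑ j, φ j ^ 2) ≤ (D φ₀ - l) / δ})) := by
  have hfo_cont : Continuous fo := by rw [funext hfo]; fun_prop
  have hf_cont : ∀ j, Continuous (f j) := fun j => by rw [funext (hf j)]; fun_prop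
  obtain rfl : D = fun φ => sSup ((fun x => fo x + ∑ j, φ j * f j x) '' Fκ) :=
    funext fun φ => by simp only [hD, hL]
  have hcoer : ∀ φ ∈ Ψ, l + δ * √(∑ j, φ j ^ 2) ≤
      sSup ((fun x => fo x + ∑ j, φ j * f j x) '' Fκ) := fun φ hφ => by
    rw [hΨ] at hφ
    exact hl ▸ sInf_add_mul_sqrt_sum_sq_le_sSup_lagrangian hFκcpt hFκne hfo_cont hf_cont
      hsphere hφ.1
  have hΨ_closed : IsClosed Ψ := by
    rw [hΨ, Set.ofPred_and]
    exact (isClosed_le continuous_const continuous_id).inter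
      (Matrix.isClosed_setOf_posSemidef.preimage (by fun_prop))
  obtain ⟨φs, hφs, hmin⟩ := exists_isMinOn_of_coercive hδ hcoer hΨ_closed hΨne
    (continuous_sSup_lagrangian hFκcpt hfo_cont hf_cont).continuousOn
    isCompact_setOf_sqrt_sum_sq_le
  exact ⟨hcoer, ⟨φs, hφs, hmin⟩,
    fun φ₀ hφ₀ φs' hφs' hmin' => le_div_of_coercive hδ hcoer hφs' (hmin' φ₀ hφ₀),
    fun φ₀ hφ₀ => sInf_image_eq_sInf_image_sep_of_coercive hδ hcoer hφs hmin hφ₀⟩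

/-- Lemma 3. If every nonnegative unit-norm multiplier direction `φ`
satisfies `sup_{x ∈ Fκ} f_φ(x) ≥ δ > 0`, then with `l = inf_{x ∈ Fκ} f_o(x)`:
(i) `D(φ) ≥ l + δ‖φ‖` on `Ψ` (coercivity); (ii) the infimum of `D` over `Ψ` is attained;
(iii) for any `φ₀ ∈ Ψ`, with `b = (D(φ₀) − l)/δ`, every minimizer of `D` over `Ψ` lies in
the bounded set `Ψ^b`, and `inf_{Ψ} D = inf_{Ψ^b} D`. -/
theorem dual_coercive_and_bounded_multipliers
    (n : ℕ) (hn : 1 ≤ n) (J : Type) [Fintype J]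
    (Ao : Matrix (Fin n) (Fin n) ℂ) (A : J → Matrix (Fin n) (Fin n) ℂ)
    (so : Fin n → ℂ) (s : J → Fin n → ℂ) (co : ℝ) (c : J → ℝ)
    (hAo : Ao.IsHermitian) (hA : ∀ j, (A j).IsHermitian)
    (fo : (Fin n → ℂ) → ℝ)
    (hfo : ∀ x, fo x = 2 * (star so ⬝ᵥ x).re - (star x ⬝ᵥ Ao.mulVec x).re + co)
    (f : J → (Fin n → ℂ) → ℝ)
    (hf : ∀ j x, f j x = 2 * (star (s j) ⬝ᵥ x).re - (star x ⬝ᵥ (A j).mulVec x).re + c j)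
    (L : (J → ℝ) → (Fin n → ℂ) → ℝ)
    (hL : ∀ φ x, L φ x = fo x + ∑ j, φ j * f j x)
    (Ψ : Set (J → ℝ))
    (hΨ : Ψ = {φ | (∀ j, 0 ≤ φ j) ∧ (Ao + ∑ j, φ j • A j).PosSemidef})
    (hΨne : Ψ.Nonempty)
    (κ : J → ℝ) (hκ : ∀ j, 0 ≤ κ j)
    (Fκ : Set (Fin n → ℂ))
    (hFκ : Fκ = {x | 0 ≤ ∑ j, κ j * f j x})
    (hFκne : Fκ.Nonempty) (hFκcpt : IsCompact Fκ)
    (D : (J → ℝ) → ℝ)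
    (hD : ∀ φ, D φ = sSup ((fun x => L φ x) '' Fκ))
    (δ : ℝ) (hδ : 0 < δ)
    (hsphere : ∀ φ : J → ℝ, (∀ j, 0 ≤ φ j) → Real.sqrt (∑ j, φ j ^ 2) = 1 →
      δ ≤ sSup ((fun x => ∑ j, φ j * f j x) '' Fκ))
    (l : ℝ) (hl : l = sInf (fo '' Fκ)) :
    (∀ φ ∈ Ψ, l + δ * Real.sqrt (∑ j, φ j ^ 2) ≤ D φ) ∧
    (∃ φs ∈ Ψ, ∀ φ ∈ Ψ, D φs ≤ D φ) ∧
    (∀ φ₀ ∈ Ψ, ∀ φs ∈ Ψ, (∀ φ ∈ Ψ, D φs ≤ D φ) →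
      Real.sqrt (∑ j, φs j ^ 2) ≤ (D φ₀ - l) / δ) ∧
    (∀ φ₀ ∈ Ψ,
      sInf (D '' Ψ) =
        sInf (D '' {φ ∈ Ψ | Real.sqrt (∑ j, φ j ^ 2) ≤ (D φ₀ - l) / δ})) :=
  dual_coercive_and_bounded_multipliers_general n J Ao A so s co c fo hfo f hf L hL Ψ hΨ hΨne Fκ
    hFκne hFκcpt D hD δ hδ hsphere l hl
end

section
/- Assume the feasible set F_P is nonempty. Let x* ∈ F_κ attain sup_{x ∈ F_κ} S(x). Suppose γ : J → ℝ with γ_j ≥ 0 for all j is such that A_γ = Σ_j γ_j A_j is positive definite and f_γ(x*) = Σ_j γ_j f_j(x*) = 0. Then f_j(x*) ≥ 0 for every j ∈ J; that is, x* is feasible. -/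
/-!
If some constraint were violated at `x*`, then, as `A_γ` is positive definite, `A_γ + ε A_j`
is still positive semidefinite for a small `ε > 0`, so the multipliers `ψ + t (γ + ε e_j)`,
`t ≥ 0`, stay in `Ψ` for any `ψ ∈ Ψ`. Along this ray the Lagrangian at `x*` decreases like
`t ε f_j(x*) → -∞` (using `f_γ(x*) = 0`), so `S(x*) = -∞`. But at a feasible point `x₀` every
`f_φ(x₀)` is nonnegative, so `S(x₀) ≥ f_o(x₀) > -∞`, and `x₀ ∈ F_κ` contradicts maximality.
-/

open Matrix ComplexOrder

open scoped MatrixOrder Matrix.Norms.L2Operator in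
theorem Matrix.PosDef.exists_pos_add_smul_posSemidef {ι : Type*} [Fintype ι] [DecidableEq ι]
    {P Q : Matrix ι ι ℂ} (hP : P.PosDef) (hQ : Q.IsHermitian) :
    ∃ ε : ℝ, 0 < ε ∧ (P + ε • Q).PosSemidef := by
  cases subsingleton_or_nontrivial (Matrix ι ι ℂ)
  · exact ⟨1, one_pos, Subsingleton.elim 0 (P + (1 : ℝ) • Q) ▸ .zero⟩
  -- `r ≤ P` and `-‖Q‖ ≤ Q` in the C⋆-algebra order, so `ε = r / (‖Q‖ + 1)` works.
  obtain ⟨r, hr, hrP⟩ := (CFC.exists_pos_algebraMap_le_iff hP.isHermitian.isSelfAdjoint).2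
    fun x hx => hP.isStrictlyPositive.spectrum_pos hx
  have hQ' := hQ.isSelfAdjoint.neg_algebraMap_norm_le_self
  set ε := r / (‖Q‖ + 1)
  have hε : 0 < ε := by positivity
  have hεQ : ε * ‖Q‖ ≤ r := by
    rw [div_mul_eq_mul_div, div_le_iff₀ (by positivity)]
    nlinarith
  refine ⟨ε, hε, nonneg_iff_posSemidef.1 ?_⟩
  calc (0 : Matrix ι ι ℂ) ≤ algebraMap ℝ _ (r - ε * ‖Q‖) := algebraMap_nonneg _ (by linarith)
    _ = algebraMap ℝ _ r + ε • -algebraMap ℝ _ ‖Q‖ := by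
        rw [map_sub, map_mul, smul_neg, Algebra.smul_def, sub_eq_add_neg]
    _ ≤ P + ε • Q := add_le_add hrP (smul_le_smul_of_nonneg_left hQ' hε.le)

theorem Finset.sum_add_piSingle_smul {J R M : Type*} [Fintype J] [DecidableEq J] [Semiring R]
    [AddCommMonoid M] [Module R M] (γ : J → R) (j₀ : J) (ε : R) (v : J → M) :
    ∑ j, (γ + Pi.single j₀ ε : J → R) j • v j = ∑ j, γ j • v j + ε • v j₀ := by
  simp [add_smul, Finset.sum_add_distrib, Pi.single_apply]

section Multipliers

variable {J ι 𝕜 : Type*} [Fintype J] [RCLike 𝕜]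

def multiplierSet (A₀ : Matrix ι ι 𝕜) (A : J → Matrix ι ι 𝕜) : Set (J → ℝ) :=
  {φ | (∀ j, 0 ≤ φ j) ∧ (A₀ + ∑ j, φ j • A j).PosSemidef}

variable {A₀ : Matrix ι ι 𝕜} {A : J → Matrix ι ι 𝕜} {φ d : J → ℝ}

lemma add_smul_mem_multiplierSet (hφ : φ ∈ multiplierSet A₀ A) (hd : ∀ j, 0 ≤ d j)
    (hAd : (∑ j, d j • A j).PosSemidef) {t : ℝ} (ht : 0 ≤ t) :
    φ + t • d ∈ multiplierSet A₀ A := by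
  refine ⟨fun j => add_nonneg (hφ.1 j) (mul_nonneg ht (hd j)), ?_⟩
  have hsum : A₀ + ∑ j, (φ + t • d) j • A j = (A₀ + ∑ j, φ j • A j) + t • ∑ j, d j • A j := by
    simp only [Pi.add_apply, Pi.smul_apply, smul_eq_mul, add_smul, mul_smul,
      Finset.sum_add_distrib, Finset.smul_sum, add_assoc]
  rw [hsum]
  exact hφ.2.add (hAd.smul ht)

lemma exists_mem_multiplierSet_sum_mul_lt (hφ : φ ∈ multiplierSet A₀ A) (hd : ∀ j, 0 ≤ d j)
    (hAd : (∑ j, d j • A j).PosSemidef) {g : J → ℝ} (hdg : ∑ j, d j * g j < 0) (M : ℝ) :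
    ∃ ψ ∈ multiplierSet A₀ A, ∑ j, ψ j * g j < M := by
  have hline : ∀ t : ℝ, ∑ j, (φ + t • d) j * g j = ∑ j, φ j * g j + t * ∑ j, d j * g j := by
    intro t
    simp only [Pi.add_apply, Pi.smul_apply, smul_eq_mul, add_mul, mul_assoc,
      Finset.sum_add_distrib, Finset.mul_sum]
  have hbot : Filter.Tendsto (fun t : ℝ => ∑ j, φ j * g j + t * ∑ j, d j * g j)
      Filter.atTop Filter.atBot :=
    Filter.tendsto_atBot_add_const_left _ _ (Filter.tendsto_id.atTop_mul_const_of_neg hdg)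
  obtain ⟨t, ht, hlt⟩ :=
    ((Filter.eventually_ge_atTop 0).and (hbot.eventually (Filter.eventually_lt_atBot M))).exists
  exact ⟨φ + t • d, add_smul_mem_multiplierSet hφ hd hAd ht, (hline t).trans_lt hlt⟩

end Multipliers

lemma exists_mem_multiplierSet_sum_mul_lt_of_posDef {J ι : Type*} [Fintype J] [Fintype ι]
    [DecidableEq ι] {A₀ : Matrix ι ι ℂ} {A : J → Matrix ι ι ℂ} {ψ γ : J → ℝ} {g : J → ℝ}
    {j₀ : J} (hψ : ψ ∈ multiplierSet A₀ A) (hγ : ∀ j, 0 ≤ γ j) (hAγ : (∑ j, γ j • A j).PosDef)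
    (hA : (A j₀).IsHermitian) (hγg : ∑ j, γ j * g j = 0) (hg : g j₀ < 0) (M : ℝ) :
    ∃ φ ∈ multiplierSet A₀ A, ∑ j, φ j * g j < M := by
  classical
  obtain ⟨ε, hε, hAε⟩ := hAγ.exists_pos_add_smul_posSemidef hA
  have hd : ∀ j, 0 ≤ (γ + Pi.single j₀ ε : J → ℝ) j :=
    fun j => add_nonneg (hγ j) ((Pi.single_nonneg.2 hε.le : (0 : J → ℝ) ≤ _) j)
  have hAd : (∑ j, (γ + Pi.single j₀ ε : J → ℝ) j • A j).PosSemidef := by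
    rwa [Finset.sum_add_piSingle_smul]
  have hdg : ∑ j, (γ + Pi.single j₀ ε : J → ℝ) j * g j < 0 := by
    have hsplit := Finset.sum_add_piSingle_smul γ j₀ ε g
    simp only [smul_eq_mul] at hsplit
    rw [hsplit, hγg, zero_add]
    exact mul_neg_of_pos_of_neg hε hg
  exact exists_mem_multiplierSet_sum_mul_lt hψ hd hAd hdg M

theorem sion_maximizer_on_compact_boundary_is_feasible_general
    (n : ℕ) (J : Type) [Fintype J]
    (Ao : Matrix (Fin n) (Fin n) ℂ) (A : J → Matrix (Fin n) (Fin n) ℂ)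
    (hA : ∀ j, (A j).IsHermitian)
    (fo : (Fin n → ℂ) → ℝ)
    (f : J → (Fin n → ℂ) → ℝ)
    (L : (J → ℝ) → (Fin n → ℂ) → ℝ)
    (hL : ∀ φ x, L φ x = fo x + ∑ j, φ j * f j x)
    (Ψ : Set (J → ℝ))
    (hΨ : Ψ = {φ | (∀ j, 0 ≤ φ j) ∧ (Ao + ∑ j, φ j • A j).PosSemidef})
    (hΨne : Ψ.Nonempty)
    (κ : J → ℝ) (hκ : ∀ j, 0 ≤ κ j)
    (Fκ : Set (Fin n → ℂ))
    (hFκ : Fκ = {x | 0 ≤ ∑ j, κ j * f j x})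
    (S : (Fin n → ℂ) → EReal)
    (hS : ∀ x, S x = ⨅ φ ∈ Ψ, (L φ x : EReal))
    (hFPne : {x : Fin n → ℂ | ∀ j, 0 ≤ f j x}.Nonempty)
    (xs : Fin n → ℂ)
    (hxsmax : ∀ x ∈ Fκ, S x ≤ S xs)
    (γ : J → ℝ) (hγ : ∀ j, 0 ≤ γ j)
    (hAγ : (∑ j, γ j • A j).PosDef)
    (hfγ : ∑ j, γ j * f j xs = 0) :
    ∀ j, 0 ≤ f j xs := by
  subst hΨ hFκ
  intro j₀
  by_contra! hj₀
  obtain ⟨x₀, hx₀⟩ := hFPne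
  obtain ⟨ψ, hψ⟩ := hΨne
  obtain ⟨φ, hφ, hφxs⟩ :=
    exists_mem_multiplierSet_sum_mul_lt_of_posDef hψ hγ hAγ (hA j₀) hfγ hj₀ (fo x₀ - fo xs)
  have hx₀κ : 0 ≤ ∑ j, κ j * f j x₀ := Finset.sum_nonneg fun j _ => mul_nonneg (hκ j) (hx₀ j)
  have hSx₀ : (fo x₀ : EReal) ≤ S x₀ := hS x₀ ▸ le_iInf₂ fun φ hφ => by
    rw [hL, EReal.coe_le_coe_iff, le_add_iff_nonneg_right]
    exact Finset.sum_nonneg fun j _ => mul_nonneg (hφ.1 j) (hx₀ j)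
  have hSxs : S xs ≤ (L φ xs : EReal) := hS xs ▸ iInf₂_le φ hφ
  have hchain := (hSx₀.trans (hxsmax x₀ hx₀κ)).trans hSxs
  rw [EReal.coe_le_coe_iff, hL] at hchain
  linarith

/-- Lemma 4. If `x*` maximizes the Sion function over `Fκ` and lies on
the boundary of a composite constraint `f_γ` with positive definite quadratic part
(`f_γ(x*) = 0`, `A_γ ≻ 0`, `γ ≥ 0`), then `x*` satisfies every constraint:
`f_j(x*) ≥ 0` for all `j`. -/
theorem sion_maximizer_on_compact_boundary_is_feasible
    (n : ℕ) (hn : 1 ≤ n) (J : Type) [Fintype J]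
    (Ao : Matrix (Fin n) (Fin n) ℂ) (A : J → Matrix (Fin n) (Fin n) ℂ)
    (so : Fin n → ℂ) (s : J → Fin n → ℂ) (co : ℝ) (c : J → ℝ)
    (hAo : Ao.IsHermitian) (hA : ∀ j, (A j).IsHermitian)
    (fo : (Fin n → ℂ) → ℝ)
    (hfo : ∀ x, fo x = 2 * (star so ⬝ᵥ x).re - (star x ⬝ᵥ Ao.mulVec x).re + co)
    (f : J → (Fin n → ℂ) → ℝ)
    (hf : ∀ j x, f j x = 2 * (star (s j) ⬝ᵥ x).re - (star x ⬝ᵥ (A j).mulVec x).re + c j)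
    (L : (J → ℝ) → (Fin n → ℂ) → ℝ)
    (hL : ∀ φ x, L φ x = fo x + ∑ j, φ j * f j x)
    (Ψ : Set (J → ℝ))
    (hΨ : Ψ = {φ | (∀ j, 0 ≤ φ j) ∧ (Ao + ∑ j, φ j • A j).PosSemidef})
    (hΨne : Ψ.Nonempty)
    (κ : J → ℝ) (hκ : ∀ j, 0 ≤ κ j)
    (Fκ : Set (Fin n → ℂ))
    (hFκ : Fκ = {x | 0 ≤ ∑ j, κ j * f j x})
    (hFκne : Fκ.Nonempty) (hFκcpt : IsCompact Fκ)
    (S : (Fin n → ℂ) → EReal)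
    (hS : ∀ x, S x = ⨅ φ ∈ Ψ, (L φ x : EReal))
    (hFPne : {x : Fin n → ℂ | ∀ j, 0 ≤ f j x}.Nonempty)
    (xs : Fin n → ℂ) (hxs : xs ∈ Fκ)
    (hxsmax : ∀ x ∈ Fκ, S x ≤ S xs)
    (γ : J → ℝ) (hγ : ∀ j, 0 ≤ γ j)
    (hAγ : (∑ j, γ j • A j).PosDef)
    (hfγ : ∑ j, γ j * f j xs = 0) :
    ∀ j, 0 ≤ f j xs :=
  sion_maximizer_on_compact_boundary_is_feasible_general n J Ao A hA fo f L hL Ψ hΨ hΨne κ hκ Fκ hFκ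
    S hS hFPne xs hxsmax γ hγ hAγ hfγ
end

section
/- Let x ∈ ℂ^n satisfy S(x) > −∞. Let ζ : J → ℝ with ζ_j ≥ 0 for all j, and suppose there exists t₀ > 0 such that A_o + t·A_ζ is positive semidefinite for every t ≥ t₀ (this holds in particular whenever A_ζ is positive definite). Then f_ζ(x) = Σ_j ζ_j f_j(x) ≥ 0. In other words, any point of the Sion set satisfies every nonnegative composite constraint whose quadratic part eventually dominates A_o on the positive semidefinite cone. -/
open Matrix ComplexOrder

/-- remark after Lemma 4. Any point `x` of the Sion set (`S(x) > -∞`)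
satisfies every nonnegative composite constraint `f_ζ` whose quadratic part eventually
dominates `A_o` on the positive semidefinite cone: if `ζ ≥ 0` and `A_o + t·A_ζ ⪰ 0` for
all `t ≥ t₀ > 0`, then `f_ζ(x) ≥ 0`. -/
theorem sion_set_satisfies_dominating_composite_constraints
    (n : ℕ) (hn : 1 ≤ n) (J : Type) [Fintype J]
    (Ao : Matrix (Fin n) (Fin n) ℂ) (A : J → Matrix (Fin n) (Fin n) ℂ)
    (so : Fin n → ℂ) (s : J → Fin n → ℂ) (co : ℝ) (c : J → ℝ)
    (hAo : Ao.IsHermitian) (hA : ∀ j, (A j).IsHermitian)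
    (fo : (Fin n → ℂ) → ℝ)
    (hfo : ∀ x, fo x = 2 * (star so ⬝ᵥ x).re - (star x ⬝ᵥ Ao.mulVec x).re + co)
    (f : J → (Fin n → ℂ) → ℝ)
    (hf : ∀ j x, f j x = 2 * (star (s j) ⬝ᵥ x).re - (star x ⬝ᵥ (A j).mulVec x).re + c j)
    (L : (J → ℝ) → (Fin n → ℂ) → ℝ)
    (hL : ∀ φ x, L φ x = fo x + ∑ j, φ j * f j x)
    (Ψ : Set (J → ℝ))
    (hΨ : Ψ = {φ | (∀ j, 0 ≤ φ j) ∧ (Ao + ∑ j, φ j • A j).PosSemidef})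
    (S : (Fin n → ℂ) → EReal)
    (hS : ∀ x, S x = ⨅ φ ∈ Ψ, (L φ x : EReal))
    (x : Fin n → ℂ) (hx : (⊥ : EReal) < S x)
    (ζ : J → ℝ) (hζ : ∀ j, 0 ≤ ζ j)
    (t₀ : ℝ) (ht₀ : 0 < t₀)
    (hdom : ∀ t : ℝ, t₀ ≤ t → (Ao + ∑ j, (t * ζ j) • A j).PosSemidef) :
    0 ≤ ∑ j, ζ j * f j x := by
  by_contra hneg
  push_neg at hneg
  set cval := ∑ j, ζ j * f j x with hc
  obtain ⟨z, hz1, hz2⟩ := exists_between hx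
  have hzt : z ≠ ⊤ := (hz2.trans_le le_top).ne
  lift z to ℝ using ⟨hzt, hz1.ne'⟩
  set t : ℝ := max t₀ ((z - fo x - 1) / cval) with htdef
  have ht : t₀ ≤ t := le_max_left _ _
  have hmem : (fun j => t * ζ j) ∈ Ψ := by
    rw [hΨ]
    refine ⟨fun j => mul_nonneg (ht₀.le.trans ht) (hζ j), ?_⟩
    exact hdom t ht
  have hLval : L (fun j => t * ζ j) x = fo x + t * cval := by
    rw [hL, hc, Finset.mul_sum]
    congr 1
    exact Finset.sum_congr rfl fun j _ => by ring
  have hle : S x ≤ ((fo x + t * cval : ℝ) : EReal) := by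
    rw [hS]
    have := iInf₂_le (f := fun φ (_ : φ ∈ Ψ) => ((L φ x : ℝ) : EReal))
      (fun j => t * ζ j) hmem
    rwa [hLval] at this
  have hcne : cval ≠ 0 := hneg.ne
  have htc : t * cval ≤ z - fo x - 1 := by
    have h1 : (z - fo x - 1) / cval ≤ t := le_max_right _ _
    calc t * cval ≤ ((z - fo x - 1) / cval) * cval := by
          exact mul_le_mul_of_nonpos_right h1 hneg.le
      _ = z - fo x - 1 := div_mul_cancel₀ _ hcne
  have hlt : fo x + t * cval < z := by linarith
  have : S x < (z : EReal) := hle.trans_lt (by exact_mod_cast hlt)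
  exact absurd hz2 this.asymm
end

section
/- Let n ≥ 1, z : Fin n → ℤ, and t ∈ ℤ. There exists x ∈ ℂ^n satisfying (i) for every k, 2·Re(x_k) − 2·|x_k|² = 0 and −2·Im(x_k) = 0, (ii) Σ_k Re(x_k) ≥ 1, and (iii) Σ_k z_k·Re(x_k) = t, if and only if there exists a nonempty subset T ⊆ Fin n with Σ_{k ∈ T} z_k = t. Consequently, the subset-sum decision problem for (z, t) reduces to deciding whether the quadratically constrained program max Σ_k z_k·Re(x_k) subject to (i), (ii) and Σ_k z_k·Re(x_k) ≤ t attains the value t. -/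
/-! The scattering constraints say exactly that `x_k ∈ {0, 1}`, so a feasible `x` is the
indicator vector of a subset `T`; then `Σ_k Re(x_k) = #T` and `Σ_k z_k Re(x_k) = Σ_{k ∈ T} z_k`. -/

open Finset

theorem scattering_constraint_iff (w : ℂ) :
    (2 * w.re - 2 * ‖w‖ ^ 2 = 0 ∧ -(2 * w.im) = 0) ↔ w = 0 ∨ w = 1 := by
  constructor
  · rintro ⟨hre, him⟩
    have him : w.im = 0 := by linarith
    have hquad : w.re * (w.re - 1) = 0 := by
      rw [Complex.sq_norm, Complex.normSq_apply, him] at hre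
      linarith
    rcases mul_eq_zero.mp hquad with h | h
    · exact .inl (Complex.ext h him)
    · exact .inr (Complex.ext (by simpa [sub_eq_zero] using h) him)
  · rintro (rfl | rfl) <;> simp

section Indicator

variable {ι : Type*} [Fintype ι] [DecidableEq ι]

theorem exists_finset_eq_ite_of_forall_eq_zero_or_eq_one {x : ι → ℂ}
    (hx : ∀ k, x k = 0 ∨ x k = 1) : ∃ T : Finset ι, x = fun k => if k ∈ T then 1 else 0 := by
  refine ⟨univ.filter (x · = 1), funext fun k => ?_⟩
  rcases hx k with h | h <;> simp [h]

theorem sum_mul_re_ite_mem (c : ι → ℝ) (T : Finset ι) :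
    ∑ k, c k * (if k ∈ T then (1 : ℂ) else 0).re = ∑ k ∈ T, c k := by
  simp only [apply_ite Complex.re, Complex.one_re, Complex.zero_re, mul_ite, mul_one, mul_zero,
    sum_ite_mem, univ_inter]

theorem exists_scattering_feasible_iff (z : ι → ℤ) (t : ℤ) :
    (∃ x : ι → ℂ,
        (∀ k, 2 * (x k).re - 2 * ‖x k‖ ^ 2 = 0 ∧ -(2 * (x k).im) = 0) ∧
        1 ≤ ∑ k, (x k).re ∧
        ∑ k, (z k : ℝ) * (x k).re = (t : ℝ)) ↔
      ∃ T : Finset ι, T.Nonempty ∧ ∑ k ∈ T, z k = t := by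
  have hcard (T : Finset ι) : ∑ k, (if k ∈ T then (1 : ℂ) else 0).re = #T := by
    simpa using sum_mul_re_ite_mem 1 T
  constructor
  · rintro ⟨x, hx, hpos, hval⟩
    obtain ⟨T, rfl⟩ := exists_finset_eq_ite_of_forall_eq_zero_or_eq_one fun k =>
      (scattering_constraint_iff (x k)).1 (hx k)
    rw [hcard] at hpos
    rw [sum_mul_re_ite_mem] at hval
    exact ⟨T, card_pos.mp (by exact_mod_cast hpos), by exact_mod_cast hval⟩
  · rintro ⟨T, hT, hsum⟩
    refine ⟨fun k => if k ∈ T then 1 else 0, fun k => ?_, ?_, ?_⟩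
    · exact (scattering_constraint_iff _).2 (by by_cases hk : k ∈ T <;> simp [hk])
    · rw [hcard]
      exact_mod_cast card_pos.mpr hT
    · rw [sum_mul_re_ite_mem]
      exact_mod_cast hsum

end Indicator

theorem subset_sum_iff_scqp_feasible_general
    (n : ℕ) (z : Fin n → ℤ) (t : ℤ) :
    ((∃ x : Fin n → ℂ,
        (∀ k : Fin n,
          2 * (x k).re - 2 * ‖x k‖ ^ 2 = 0 ∧ -(2 * (x k).im) = 0) ∧
        1 ≤ ∑ k, (x k).re ∧
        ∑ k, (z k : ℝ) * (x k).re = (t : ℝ)) ↔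
      (∃ T : Finset (Fin n), T.Nonempty ∧ ∑ k ∈ T, z k = t)) ∧
    ((∃ x : Fin n → ℂ,
        (∀ k : Fin n,
          2 * (x k).re - 2 * ‖x k‖ ^ 2 = 0 ∧ -(2 * (x k).im) = 0) ∧
        1 ≤ ∑ k, (x k).re ∧
        ∑ k, (z k : ℝ) * (x k).re ≤ (t : ℝ) ∧
        ∑ k, (z k : ℝ) * (x k).re = (t : ℝ)) ↔
      (∃ T : Finset (Fin n), T.Nonempty ∧ ∑ k ∈ T, z k = t)) := by
  refine ⟨exists_scattering_feasible_iff z t, ?_⟩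
  rw [← exists_scattering_feasible_iff z t]
  refine exists_congr fun x => and_congr_right' (and_congr_right' ?_)
  exact and_iff_right_of_imp le_of_eq

/-- subset sum as a SCQP. For integers `z : Fin n → ℤ` and `t : ℤ`,
there is a vector `x ∈ ℂ^n` satisfying the scattering constraints (forcing
`x_k ∈ {0,1}`), the nontriviality constraint `Σ_k Re(x_k) ≥ 1`, and the value condition
`Σ_k z_k·Re(x_k) = t`, iff some nonempty subset of the `z_k` sums to `t`; equivalently,
the quadratically constrained program with the extra constraint `Σ_k z_k·Re(x_k) ≤ t`
attains the value `t` iff some nonempty subset sums to `t`. -/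
theorem subset_sum_iff_scqp_feasible
    (n : ℕ) (hn : 1 ≤ n) (z : Fin n → ℤ) (t : ℤ) :
    ((∃ x : Fin n → ℂ,
        (∀ k : Fin n,
          2 * (x k).re - 2 * ‖x k‖ ^ 2 = 0 ∧ -(2 * (x k).im) = 0) ∧
        1 ≤ ∑ k, (x k).re ∧
        ∑ k, (z k : ℝ) * (x k).re = (t : ℝ)) ↔
      (∃ T : Finset (Fin n), T.Nonempty ∧ ∑ k ∈ T, z k = t)) ∧
    ((∃ x : Fin n → ℂ,
        (∀ k : Fin n,
          2 * (x k).re - 2 * ‖x k‖ ^ 2 = 0 ∧ -(2 * (x k).im) = 0) ∧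
        1 ≤ ∑ k, (x k).re ∧
        ∑ k, (z k : ℝ) * (x k).re ≤ (t : ℝ) ∧
        ∑ k, (z k : ℝ) * (x k).re = (t : ℝ)) ↔
      (∃ T : Finset (Fin n), T.Nonempty ∧ ∑ k ∈ T, z k = t)) :=
  subset_sum_iff_scqp_feasible_general n z t
end

section
/- Let E be a complex inner product space, K ⊆ E any subset, g : E → ℝ any function, γ > 0 a real number, and r_o ∈ E. Define f(r, x) = 2·Re⟨r, x⟩ + g(x), and set r_n = r_o + γ·x_o. Suppose x_o ∈ K maximizes f(r_o, ·) over K, and x_n ∈ K maximizes f(r_n, ·) over K. Then Re⟨r_n − r_o, x_n − x_o⟩ ≥ 0, equivalently Re⟨x_o, x_n − x_o⟩ ≥ 0, and consequently ‖x_n‖² ≥ ‖x_o‖² + ‖x_n − x_o‖² ≥ ‖x_o‖²: the scrape update never decreases the norm of the maximizer. -/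
open scoped InnerProductSpace

/-!
Comparing the two maximality conditions, each at the other's maximizer, the `g` terms cancel and
leave `Re⟪r_n − r_o, x_n − x_o⟫ ≥ 0` (monotonicity of the maximizer in the linear perturbation).
Since `r_n − r_o = γ x_o` with `γ > 0`, this says `Re⟪x_o, x_n − x_o⟫ ≥ 0`, and expanding
`‖x_o + (x_n − x_o)‖²` gives the norm inequality.
-/

section

variable {𝕜 E : Type*} [RCLike 𝕜] [NormedAddCommGroup E] [InnerProductSpace 𝕜 E]

open RCLike

theorem re_inner_sub_sub_nonneg_of_isMaxOn {K : Set E} {g : E → ℝ} {r₁ r₂ x₁ x₂ : E}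
    (hx₁ : x₁ ∈ K) (hx₂ : x₂ ∈ K)
    (h₁ : IsMaxOn (fun x ↦ 2 * re ⟪r₁, x⟫_𝕜 + g x) K x₁)
    (h₂ : IsMaxOn (fun x ↦ 2 * re ⟪r₂, x⟫_𝕜 + g x) K x₂) :
    0 ≤ re ⟪r₂ - r₁, x₂ - x₁⟫_𝕜 := by
  have h₁₂ : 2 * re ⟪r₁, x₂⟫_𝕜 + g x₂ ≤ 2 * re ⟪r₁, x₁⟫_𝕜 + g x₁ := h₁ hx₂
  have h₂₁ : 2 * re ⟪r₂, x₁⟫_𝕜 + g x₁ ≤ 2 * re ⟪r₂, x₂⟫_𝕜 + g x₂ := h₂ hx₁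
  simp only [inner_sub_left, inner_sub_right, map_sub]
  linarith

theorem re_inner_real_smul_left [Module ℝ E] [IsScalarTower ℝ 𝕜 E] (c : ℝ) (x y : E) :
    re ⟪c • x, y⟫_𝕜 = c * re ⟪x, y⟫_𝕜 := by
  rw [real_smul_eq_coe_smul (K := 𝕜), inner_smul_real_left, smul_re]

theorem sq_norm_add_sq_norm_sub_le_of_re_inner_sub_nonneg {x y : E}
    (h : 0 ≤ re ⟪x, y - x⟫_𝕜) : ‖x‖ ^ 2 + ‖y - x‖ ^ 2 ≤ ‖y‖ ^ 2 := by
  have hy : ‖y‖ ^ 2 = ‖x‖ ^ 2 + 2 * re ⟪x, y - x⟫_𝕜 + ‖y - x‖ ^ 2 := by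
    rw [← norm_add_sq, add_sub_cancel]
  linarith

end

/-- the scrape update never decreases the norm of the maximizer.
In a complex inner product space, with `f(r, x) = 2·Re⟪r, x⟫ + g(x)` and
`r_n = r_o + γ·x_o` (`γ > 0`), if `x_o` maximizes `f(r_o, ·)` over `K` and `x_n`
maximizes `f(r_n, ·)` over `K`, then `Re⟪r_n − r_o, x_n − x_o⟫ ≥ 0`, equivalently
`Re⟪x_o, x_n − x_o⟫ ≥ 0`, and `‖x_n‖² ≥ ‖x_o‖² + ‖x_n − x_o‖² ≥ ‖x_o‖²`. -/
theorem scrape_update_nondecreasing_norm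
    {E : Type*} [NormedAddCommGroup E] [InnerProductSpace ℂ E]
    (K : Set E) (g : E → ℝ) (γ : ℝ) (hγ : 0 < γ) (ro : E)
    (f : E → E → ℝ)
    (hf : ∀ r x, f r x = 2 * (⟪r, x⟫_ℂ).re + g x)
    (xo : E) (hxoK : xo ∈ K) (hxomax : ∀ x ∈ K, f ro x ≤ f ro xo)
    (rn : E) (hrn : rn = ro + γ • xo)
    (xn : E) (hxnK : xn ∈ K) (hxnmax : ∀ x ∈ K, f rn x ≤ f rn xn) :
    0 ≤ (⟪rn - ro, xn - xo⟫_ℂ).re ∧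
    0 ≤ (⟪xo, xn - xo⟫_ℂ).re ∧
    ‖xo‖ ^ 2 + ‖xn - xo‖ ^ 2 ≤ ‖xn‖ ^ 2 ∧
    ‖xo‖ ^ 2 ≤ ‖xn‖ ^ 2 := by
  have hmono : 0 ≤ (⟪rn - ro, xn - xo⟫_ℂ).re := by
    simpa only [RCLike.re_to_complex] using re_inner_sub_sub_nonneg_of_isMaxOn (𝕜 := ℂ) hxoK hxnK
      (isMaxOn_iff.2 fun x hx ↦ by simpa only [RCLike.re_to_complex, hf] using hxomax x hx)
      (isMaxOn_iff.2 fun x hx ↦ by simpa only [RCLike.re_to_complex, hf] using hxnmax x hx)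
  have hxo : 0 ≤ (⟪xo, xn - xo⟫_ℂ).re := by
    rw [hrn, add_sub_cancel_left, ← RCLike.re_to_complex, re_inner_real_smul_left] at hmono
    exact nonneg_of_mul_nonneg_right hmono hγ
  have hnorm : ‖xo‖ ^ 2 + ‖xn - xo‖ ^ 2 ≤ ‖xn‖ ^ 2 :=
    sq_norm_add_sq_norm_sub_le_of_re_inner_sub_nonneg (𝕜 := ℂ) hxo
  exact ⟨hmono, hxo, hnorm, (le_add_of_nonneg_right (sq_nonneg _)).trans hnorm⟩
end
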